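/- arXiv:1102.0344 — 9 statements merged into one kernel-verified Lean document; each statement's English description precedes it below -/
import Mathlib

section
/- Let W be a finite-dimensional real vector space equipped with a symmetric bilinear form B. Let γ : ℝ → W be a C^∞ curve such that B(γ'(t), γ'(t)) = 0 for every t (a null curve), and let φ : ℝ → ℝ be a C^∞ function. Then for every t one has B((γ∘φ)''(t), (γ∘φ)''(t)) = φ'(t)^4 · B(γ''(φ(t)), γ''(φ(t))). Consequently the 1-form (B(d²γ/dt², d²γ/dt²))^{1/4} dt is independent of the choice of parameter, so the conformal arc-length is well defined. -/
/-- If `γ` is a smooth null curve (with respect to a symmetric bilinear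
form `B`) into a finite-dimensional real vector space and `φ` is a smooth reparameterization,
then `B((γ∘φ)'', (γ∘φ)'') = (φ')⁴ · B(γ''∘φ, γ''∘φ)`; hence the 1-form
`(B(γ'', γ''))^{1/4} dt` is parameter independent and the conformal arc-length is
well defined. -/
theorem conformal_arclength_well_defined
    (W : Type*) [NormedAddCommGroup W] [NormedSpace ℝ W] [FiniteDimensional ℝ W]
    (B : W →ₗ[ℝ] W →ₗ[ℝ] ℝ) (hB : ∀ x y : W, B x y = B y x)
    (γ : ℝ → W) (hγ : ContDiff ℝ (⊤ : ℕ∞) γ)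
    (hnull : ∀ t : ℝ, B (deriv γ t) (deriv γ t) = 0)
    (φ : ℝ → ℝ) (hφ : ContDiff ℝ (⊤ : ℕ∞) φ) :
    ∀ t : ℝ,
      B (iteratedDeriv 2 (γ ∘ φ) t) (iteratedDeriv 2 (γ ∘ φ) t) =
        (deriv φ t) ^ 4 * B (iteratedDeriv 2 γ (φ t)) (iteratedDeriv 2 γ (φ t)) := by
  intro t
  have hγ0 : ContDiff ℝ ((⊤:ℕ∞):WithTop ℕ∞) γ := hγ.of_le (by simp)
  have hφ0 : ContDiff ℝ ((⊤:ℕ∞):WithTop ℕ∞) φ := hφ.of_le (by simp)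
  have hγ1 : ContDiff ℝ ((⊤:ℕ∞):WithTop ℕ∞) (deriv γ) := (contDiff_infty_iff_deriv.mp hγ0).2
  have hφ1 : ContDiff ℝ ((⊤:ℕ∞):WithTop ℕ∞) (deriv φ) := (contDiff_infty_iff_deriv.mp hφ0).2
  -- continuous bilinear version
  let C : W →ₗ[ℝ] W →L[ℝ] ℝ :=
    { toFun := fun x => LinearMap.toContinuousLinearMap (B x),
      map_add' := fun x y => by ext z; simp,
      map_smul' := fun c x => by ext z; simp }
  let Cc : W →L[ℝ] W →L[ℝ] ℝ := LinearMap.toContinuousLinearMap C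
  have hCc : ∀ x y, Cc x y = B x y := fun x y => rfl
  have dγ : ∀ s, HasDerivAt γ (deriv γ s) s := fun s => (hγ0.differentiable (by simp) s).hasDerivAt
  have dγ' : ∀ s, HasDerivAt (deriv γ) (deriv (deriv γ) s) s :=
    fun s => (hγ1.differentiable (by simp) s).hasDerivAt
  have dφ : ∀ s, HasDerivAt φ (deriv φ s) s := fun s => (hφ0.differentiable (by simp) s).hasDerivAt
  have dφ' : ∀ s, HasDerivAt (deriv φ) (deriv (deriv φ) s) s :=
    fun s => (hφ1.differentiable (by simp) s).hasDerivAt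
  -- null implies B(γ'', γ') = 0
  have horth : ∀ s, B (deriv (deriv γ) s) (deriv γ s) = 0 := by
    intro s
    have h1 : HasDerivAt (fun u => Cc (deriv γ u)) (Cc (deriv (deriv γ) s)) s :=
      Cc.hasFDerivAt.comp_hasDerivAt s (dγ' s)
    have h2 : HasDerivAt (fun u => Cc (deriv γ u) (deriv γ u))
        (Cc (deriv (deriv γ) s) (deriv γ s) + Cc (deriv γ s) (deriv (deriv γ) s)) s :=
      h1.clm_apply (dγ' s)
    have h3 : (fun u => Cc (deriv γ u) (deriv γ u)) = fun _ => (0:ℝ) := by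
      funext u; simpa [hCc] using hnull u
    rw [h3] at h2
    have h4 := (hasDerivAt_const s (0:ℝ)).unique h2
    have hsym : Cc (deriv γ s) (deriv (deriv γ) s) = Cc (deriv (deriv γ) s) (deriv γ s) := by
      rw [hCc, hCc]; exact hB _ _
    rw [hsym] at h4
    have : (2:ℝ) * Cc (deriv (deriv γ) s) (deriv γ s) = 0 := by linarith
    have := mul_left_cancel₀ (two_ne_zero) (by rw [this, mul_zero] :
      (2:ℝ) * Cc (deriv (deriv γ) s) (deriv γ s) = 2 * 0)
    rw [← hCc]; exact this
  have h1 : ∀ s, HasDerivAt (γ ∘ φ) (deriv φ s • deriv γ (φ s)) s :=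
    fun s => (dγ (φ s)).scomp s (dφ s)
  have hd1 : deriv (γ ∘ φ) = fun s => deriv φ s • deriv γ (φ s) :=
    funext fun s => (h1 s).deriv
  have h2 : HasDerivAt (fun s => deriv φ s • deriv γ (φ s))
      (deriv φ t • (deriv φ t • deriv (deriv γ) (φ t)) +
        deriv (deriv φ) t • deriv γ (φ t)) t :=
    (dφ' t).smul ((dγ' (φ t)).scomp t (dφ t))
  have hd2 : iteratedDeriv 2 (γ ∘ φ) t = deriv φ t • (deriv φ t • deriv (deriv γ) (φ t)) +
      deriv (deriv φ) t • deriv γ (φ t) := by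
    rw [iteratedDeriv_succ, iteratedDeriv_one, hd1]
    exact h2.deriv
  have hγ2 : iteratedDeriv 2 γ (φ t) = deriv (deriv γ) (φ t) := by
    rw [iteratedDeriv_succ, iteratedDeriv_one]
  rw [hd2, hγ2]
  have e1 := hnull (φ t)
  have e2 := horth (φ t)
  have e3 : B (deriv γ (φ t)) (deriv (deriv γ) (φ t)) = 0 := by rw [hB]; exact e2
  simp only [map_add, map_smul, LinearMap.add_apply, LinearMap.smul_apply, smul_eq_mul,
    e1, e2, e3, mul_zero, zero_add, add_zero]
  ring
end

section
/- Let γ : ℝ → ℝ⁴ be a C^∞ curve such that for all ρ: ⟨γ, γ⟩₄ = 1, ⟨γ', γ'⟩₄ = 0, and ⟨γ'', γ''⟩₄ = 1, and set Q₂(ρ) = −(1/2)·⟨γ'''(ρ), γ'''(ρ)⟩₄. Then for every ρ the four vectors γ(ρ), γ'(ρ), γ''(ρ), γ'''(ρ) are linearly independent (hence a basis of ℝ⁴), and γ satisfies the fourth-order differential equation γ⁽⁴⁾ = γ + Q₂'·γ' + 2Q₂·γ''. (This is the condensed form of the conformal Frenet formula for plane curves.) -/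
/-- The Minkowski bilinear form on `ℝ⁴₁`: `⟨x,y⟩ = -x₀y₀ + x₁y₁ + x₂y₂ + x₃y₃`. -/
def mink4 (x y : Fin 4 → ℝ) : ℝ :=
  -(x 0 * y 0) + x 1 * y 1 + x 2 * y 2 + x 3 * y 3

lemma mink4_symm (x y : Fin 4 → ℝ) : mink4 x y = mink4 y x := by unfold mink4; ring

lemma mink4_comb (a b c d : ℝ) (x0 x1 x2 x3 w : Fin 4 → ℝ) :
    mink4 (a • x0 + b • x1 + c • x2 + d • x3) w
      = a * mink4 x0 w + b * mink4 x1 w + c * mink4 x2 w + d * mink4 x3 w := by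
  simp [mink4, Pi.add_apply, Pi.smul_apply, smul_eq_mul]; ring

lemma mink4_sub_comb (a b : ℝ) (x y z u w : Fin 4 → ℝ) :
    mink4 (x - (y + a • z + b • u)) w
      = mink4 x w - mink4 y w - a * mink4 z w - b * mink4 u w := by
  simp [mink4, Pi.add_apply, Pi.sub_apply, Pi.smul_apply, smul_eq_mul]; ring

lemma hasDerivAt_mink4 {f g : ℝ → Fin 4 → ℝ} {f' g' : Fin 4 → ℝ} {ρ : ℝ}
    (hf : HasDerivAt f f' ρ) (hg : HasDerivAt g g' ρ) :
    HasDerivAt (fun ρ => mink4 (f ρ) (g ρ)) (mink4 f' (g ρ) + mink4 (f ρ) g') ρ := by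
  have hfi : ∀ i, HasDerivAt (fun x => f x i) (f' i) ρ := hasDerivAt_pi.mp hf
  have hgi : ∀ i, HasDerivAt (fun x => g x i) (g' i) ρ := hasDerivAt_pi.mp hg
  have h := ((((hfi 0).mul (hgi 0)).neg.add ((hfi 1).mul (hgi 1))).add
      ((hfi 2).mul (hgi 2))).add ((hfi 3).mul (hgi 3))
  refine h.congr_deriv ?_
  simp [mink4]; ring

lemma iter_hasDerivAt (γ : ℝ → Fin 4 → ℝ) (hγ : ContDiff ℝ (⊤ : ℕ∞) γ) (n : ℕ) (ρ : ℝ) :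
    HasDerivAt (iteratedDeriv n γ) (iteratedDeriv (n+1) γ ρ) ρ := by
  have h : ContDiff ℝ ((⊤ : ℕ∞) : WithTop ℕ∞) (iteratedDeriv n γ) := by
    rw [iteratedDeriv_eq_iterate]
    exact ContDiff.iterate_deriv n (hγ.of_le (by simp))
  rw [iteratedDeriv_succ]
  exact ((h.differentiable (by simp)) ρ).hasDerivAt

lemma mink4_step (γ : ℝ → Fin 4 → ℝ) (hγ : ContDiff ℝ (⊤ : ℕ∞) γ) (n m : ℕ)
    {c c' : ℝ → ℝ} (hc : ∀ ρ, HasDerivAt c (c' ρ) ρ)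
    (h : ∀ ρ, mink4 (iteratedDeriv n γ ρ) (iteratedDeriv m γ ρ) = c ρ) (ρ : ℝ) :
    mink4 (iteratedDeriv (n+1) γ ρ) (iteratedDeriv m γ ρ)
      + mink4 (iteratedDeriv n γ ρ) (iteratedDeriv (m+1) γ ρ) = c' ρ := by
  have h1 := hasDerivAt_mink4 (iter_hasDerivAt γ hγ n ρ) (iter_hasDerivAt γ hγ m ρ)
  have he : (fun ρ => mink4 (iteratedDeriv n γ ρ) (iteratedDeriv m γ ρ)) = c := funext h
  rw [he] at h1
  exact h1.unique (hc ρ)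

/-- For a smooth curve `γ` in `ℝ⁴₁` with `⟨γ,γ⟩ = 1`, `⟨γ',γ'⟩ = 0`,
`⟨γ'',γ''⟩ = 1`, and conformal curvature `Q₂ = -½⟨γ''',γ'''⟩`, the vectors
`γ, γ', γ'', γ'''` are linearly independent at each parameter and `γ` satisfies the
fourth order ODE `γ⁽⁴⁾ = γ + Q₂'·γ' + 2Q₂·γ''` (the condensed conformal Frenet formula
for plane curves). -/
theorem frenet_formula_plane_condensed
    (γ : ℝ → Fin 4 → ℝ) (hγ : ContDiff ℝ (⊤ : ℕ∞) γ)
    (h0 : ∀ ρ, mink4 (γ ρ) (γ ρ) = 1)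
    (h1 : ∀ ρ, mink4 (deriv γ ρ) (deriv γ ρ) = 0)
    (h2 : ∀ ρ, mink4 (iteratedDeriv 2 γ ρ) (iteratedDeriv 2 γ ρ) = 1)
    (Q₂ : ℝ → ℝ)
    (hQ₂ : ∀ ρ, Q₂ ρ = -(1/2) * mink4 (iteratedDeriv 3 γ ρ) (iteratedDeriv 3 γ ρ)) :
    (∀ ρ : ℝ, LinearIndependent ℝ
      ![γ ρ, deriv γ ρ, iteratedDeriv 2 γ ρ, iteratedDeriv 3 γ ρ]) ∧
    (∀ ρ : ℝ, iteratedDeriv 4 γ ρ =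
      γ ρ + deriv Q₂ ρ • deriv γ ρ + (2 * Q₂ ρ) • iteratedDeriv 2 γ ρ) := by
  set Γ : ℕ → ℝ → Fin 4 → ℝ := fun n => iteratedDeriv n γ with hΓ
  have hΓ0 : Γ 0 = γ := iteratedDeriv_zero
  have hΓ1 : Γ 1 = deriv γ := iteratedDeriv_one
  have hconst : ∀ (r : ℝ) (ρ : ℝ), HasDerivAt (fun _ : ℝ => r) 0 ρ := fun r ρ => hasDerivAt_const ρ r
  -- basic inner products
  have g00 : ∀ ρ, mink4 (Γ 0 ρ) (Γ 0 ρ) = 1 := by rw [hΓ0]; exact h0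
  have g11 : ∀ ρ, mink4 (Γ 1 ρ) (Γ 1 ρ) = 0 := by rw [hΓ1]; exact h1
  have g22 : ∀ ρ, mink4 (Γ 2 ρ) (Γ 2 ρ) = 1 := h2
  have g10 : ∀ ρ, mink4 (Γ 1 ρ) (Γ 0 ρ) = 0 := by
    intro ρ
    have := mink4_step γ hγ 0 0 (hconst 1) g00 ρ
    have hs := mink4_symm (Γ 0 ρ) (Γ 1 ρ)
    linarith
  have g20 : ∀ ρ, mink4 (Γ 2 ρ) (Γ 0 ρ) = 0 := by
    intro ρ
    have := mink4_step γ hγ 1 0 (hconst 0) g10 ρ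
    have hs := mink4_symm (Γ 1 ρ) (Γ 1 ρ)
    have := g11 ρ; linarith
  have g21 : ∀ ρ, mink4 (Γ 2 ρ) (Γ 1 ρ) = 0 := by
    intro ρ
    have := mink4_step γ hγ 1 1 (hconst 0) g11 ρ
    have hs := mink4_symm (Γ 1 ρ) (Γ 2 ρ)
    linarith
  have g30 : ∀ ρ, mink4 (Γ 3 ρ) (Γ 0 ρ) = 0 := by
    intro ρ
    have := mink4_step γ hγ 2 0 (hconst 0) g20 ρ
    have hs := mink4_symm (Γ 2 ρ) (Γ 1 ρ)
    have := g21 ρ; linarith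
  have g31 : ∀ ρ, mink4 (Γ 3 ρ) (Γ 1 ρ) = -1 := by
    intro ρ
    have := mink4_step γ hγ 2 1 (hconst 0) g21 ρ
    have := g22 ρ; linarith
  have g32 : ∀ ρ, mink4 (Γ 3 ρ) (Γ 2 ρ) = 0 := by
    intro ρ
    have := mink4_step γ hγ 2 2 (hconst 1) g22 ρ
    have hs := mink4_symm (Γ 2 ρ) (Γ 3 ρ)
    linarith
  have g40 : ∀ ρ, mink4 (Γ 4 ρ) (Γ 0 ρ) = 1 := by
    intro ρ
    have := mink4_step γ hγ 3 0 (hconst 0) g30 ρ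
    have := g31 ρ; linarith
  have g41 : ∀ ρ, mink4 (Γ 4 ρ) (Γ 1 ρ) = 0 := by
    intro ρ
    have := mink4_step γ hγ 3 1 (hconst (-1)) g31 ρ
    have := g32 ρ; linarith
  have g33 : ∀ ρ, mink4 (Γ 3 ρ) (Γ 3 ρ) = -2 * Q₂ ρ := by
    intro ρ; have := hQ₂ ρ; linarith
  have g42 : ∀ ρ, mink4 (Γ 4 ρ) (Γ 2 ρ) = 2 * Q₂ ρ := by
    intro ρ
    have := mink4_step γ hγ 3 2 (hconst 0) g32 ρ
    have := g33 ρ; linarith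
  -- derivative of Q₂
  have hQd : ∀ ρ, HasDerivAt Q₂ (-(mink4 (Γ 4 ρ) (Γ 3 ρ))) ρ := by
    intro ρ
    have h1 := hasDerivAt_mink4 (iter_hasDerivAt γ hγ 3 ρ) (iter_hasDerivAt γ hγ 3 ρ)
    have h2 := h1.const_mul (-(1/2) : ℝ)
    have he : (fun ρ => -(1/2) * mink4 (iteratedDeriv 3 γ ρ) (iteratedDeriv 3 γ ρ)) = Q₂ :=
      funext fun ρ => (hQ₂ ρ).symm
    rw [he] at h2
    refine h2.congr_deriv ?_
    have hs := mink4_symm (Γ 3 ρ) (Γ 4 ρ)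
    simp only [hΓ]
    linarith [mink4_symm (iteratedDeriv 3 γ ρ) (iteratedDeriv 4 γ ρ)]
  have g43 : ∀ ρ, mink4 (Γ 4 ρ) (Γ 3 ρ) = -(deriv Q₂ ρ) := by
    intro ρ
    have := (hQd ρ).deriv
    rw [this]; ring
  -- symmetric versions needed
  have g01 : ∀ ρ, mink4 (Γ 0 ρ) (Γ 1 ρ) = 0 := fun ρ => (mink4_symm _ _).trans (g10 ρ)
  have g02 : ∀ ρ, mink4 (Γ 0 ρ) (Γ 2 ρ) = 0 := fun ρ => (mink4_symm _ _).trans (g20 ρ)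
  have g03 : ∀ ρ, mink4 (Γ 0 ρ) (Γ 3 ρ) = 0 := fun ρ => (mink4_symm _ _).trans (g30 ρ)
  have g12 : ∀ ρ, mink4 (Γ 1 ρ) (Γ 2 ρ) = 0 := fun ρ => (mink4_symm _ _).trans (g21 ρ)
  have g13 : ∀ ρ, mink4 (Γ 1 ρ) (Γ 3 ρ) = -1 := fun ρ => (mink4_symm _ _).trans (g31 ρ)
  have g23 : ∀ ρ, mink4 (Γ 2 ρ) (Γ 3 ρ) = 0 := fun ρ => (mink4_symm _ _).trans (g32 ρ)
  -- linear independence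
  have hLI : ∀ ρ : ℝ, LinearIndependent ℝ ![Γ 0 ρ, Γ 1 ρ, Γ 2 ρ, Γ 3 ρ] := by
    intro ρ
    rw [Fintype.linearIndependent_iff]
    intro c hc
    have hsum : c 0 • Γ 0 ρ + c 1 • Γ 1 ρ + c 2 • Γ 2 ρ + c 3 • Γ 3 ρ = 0 := by
      have := hc
      rwa [Fin.sum_univ_four] at this
    have key : ∀ w, c 0 * mink4 (Γ 0 ρ) w + c 1 * mink4 (Γ 1 ρ) w
        + c 2 * mink4 (Γ 2 ρ) w + c 3 * mink4 (Γ 3 ρ) w = 0 := by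
      intro w
      rw [← mink4_comb, hsum]
      simp [mink4]
    have E0 := key (Γ 0 ρ); have E1 := key (Γ 1 ρ)
    have E2 := key (Γ 2 ρ); have E3 := key (Γ 3 ρ)
    rw [g00 ρ, g10 ρ, g20 ρ, g30 ρ] at E0
    rw [g01 ρ, g11 ρ, g21 ρ, g31 ρ] at E1
    rw [g02 ρ, g12 ρ, g22 ρ, g32 ρ] at E2
    rw [g03 ρ, g13 ρ, g23 ρ, g33 ρ] at E3
    have hc0 : c 0 = 0 := by linarith
    have hc3 : c 3 = 0 := by linarith
    have hc2 : c 2 = 0 := by linarith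
    have hc1 : c 1 = 0 := by
      rw [hc3] at E3; linarith
    intro i; fin_cases i <;> assumption
  constructor
  · intro ρ
    have := hLI ρ
    rwa [hΓ0, hΓ1] at this
  · intro ρ
    set w : Fin 4 → ℝ :=
      Γ 4 ρ - (Γ 0 ρ + deriv Q₂ ρ • Γ 1 ρ + (2 * Q₂ ρ) • Γ 2 ρ) with hw
    have hwz : ∀ j, mink4 w (Γ j ρ) = 0 → True := fun _ _ => trivial
    have W0 : mink4 w (Γ 0 ρ) = 0 := by
      rw [hw, mink4_sub_comb, g40 ρ, g00 ρ, g10 ρ, g20 ρ]; ring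
    have W1 : mink4 w (Γ 1 ρ) = 0 := by
      rw [hw, mink4_sub_comb, g41 ρ, g01 ρ, g11 ρ, g21 ρ]; ring
    have W2 : mink4 w (Γ 2 ρ) = 0 := by
      rw [hw, mink4_sub_comb, g42 ρ, g02 ρ, g12 ρ, g22 ρ]; ring
    have W3 : mink4 w (Γ 3 ρ) = 0 := by
      rw [hw, mink4_sub_comb, g43 ρ, g03 ρ, g13 ρ, g23 ρ]; ring
    -- basis
    have hcard : Fintype.card (Fin 4) = Module.finrank ℝ (Fin 4 → ℝ) := by
      simp
    let B := basisOfLinearIndependentOfCardEqFinrank (hLI ρ) hcard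
    have hB : ⇑B = ![Γ 0 ρ, Γ 1 ρ, Γ 2 ρ, Γ 3 ρ] :=
      coe_basisOfLinearIndependentOfCardEqFinrank _ _
    have hrep := B.sum_repr w
    rw [Fin.sum_univ_four] at hrep
    simp only [hB] at hrep
    set d : Fin 4 → ℝ := fun i => B.repr w i with hd
    have hsum : d 0 • Γ 0 ρ + d 1 • Γ 1 ρ + d 2 • Γ 2 ρ + d 3 • Γ 3 ρ = w := by
      simpa using hrep
    have key : ∀ v, d 0 * mink4 (Γ 0 ρ) v + d 1 * mink4 (Γ 1 ρ) v
        + d 2 * mink4 (Γ 2 ρ) v + d 3 * mink4 (Γ 3 ρ) v = mink4 w v := by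
      intro v; rw [← mink4_comb, hsum]
    have E0 := (key (Γ 0 ρ)).trans W0
    have E1 := (key (Γ 1 ρ)).trans W1
    have E2 := (key (Γ 2 ρ)).trans W2
    have E3 := (key (Γ 3 ρ)).trans W3
    rw [g00 ρ, g10 ρ, g20 ρ, g30 ρ] at E0
    rw [g01 ρ, g11 ρ, g21 ρ, g31 ρ] at E1
    rw [g02 ρ, g12 ρ, g22 ρ, g32 ρ] at E2
    rw [g03 ρ, g13 ρ, g23 ρ, g33 ρ] at E3
    have hd0 : d 0 = 0 := by linarith
    have hd3 : d 3 = 0 := by linarith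
    have hd2 : d 2 = 0 := by linarith
    have hd1 : d 1 = 0 := by rw [hd3] at E3; linarith
    have hw0 : w = 0 := by
      rw [← hsum, hd0, hd1, hd2, hd3]; simp
    have : Γ 4 ρ = Γ 0 ρ + deriv Q₂ ρ • Γ 1 ρ + (2 * Q₂ ρ) • Γ 2 ρ := by
      have := sub_eq_zero.mp (hw ▸ hw0)
      exact this
    rwa [hΓ0, hΓ1] at this
end

section
/- Let σ : ℝ → ℝ⁵ be a C^∞ curve with ⟨σ, σ⟩ = 1, ⟨σ', σ'⟩ = 1, and ⟨σ'', σ''⟩ = 1 identically (derivatives with respect to l), and let γ(l) = σ(l) ∧ σ'(l) ∈ ⋀²ℝ⁵. Then ⟨γ''(l), γ''(l)⟩₂ = ⟨σ'''(l), σ'''(l)⟩ − 1 for all l. (Hence the conformal torsion satisfies T = ⟨γ'', γ''⟩₂^{-1/4} = (⟨σ''', σ'''⟩ − 1)^{-1/4}.) -/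
noncomputable section

/-- The Minkowski bilinear form on `ℝ⁵₁`:
`⟨x,y⟩ = -x₀y₀ + x₁y₁ + x₂y₂ + x₃y₃ + x₄y₄`. -/
def mink5 (x y : Fin 5 → ℝ) : ℝ :=
  -(x 0 * y 0) + x 1 * y 1 + x 2 * y 2 + x 3 * y 3 + x 4 * y 4

/-- The wedge product `u ∧ v` of two vectors of `ℝ⁵`, realized as the antisymmetric
matrix of Plücker coordinates `p i j = uᵢvⱼ - uⱼvᵢ`. -/
def wedge (u v : Fin 5 → ℝ) : Fin 5 → Fin 5 → ℝ := fun i j => u i * v j - u j * v i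

/-- The signature `(-1,1,1,1,1)` of the Minkowski form. -/
def eta5 (i : Fin 5) : ℝ := if i = 0 then -1 else 1

/-- The symmetric bilinear form on `⋀²ℝ⁵₁` (in Plücker coordinates) determined by
`⟨u∧v, w∧z⟩₂ = ⟨u,w⟩⟨v,z⟩ − ⟨u,z⟩⟨v,w⟩`. -/
def mink2 (p q : Fin 5 → Fin 5 → ℝ) : ℝ :=
  (1/2) * ∑ i : Fin 5, ∑ j : Fin 5, eta5 i * eta5 j * p i j * q i j

lemma mink2_expand (a b c d : Fin 5 → ℝ) :
    mink2 (fun i j => wedge a b i j + wedge c d i j)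
      (fun i j => wedge a b i j + wedge c d i j) =
    (mink5 a a * mink5 b b - mink5 a b ^ 2)
      + 2 * (mink5 a c * mink5 b d - mink5 a d * mink5 b c)
      + (mink5 c c * mink5 d d - mink5 c d ^ 2) := by
  have E0 : eta5 0 = -1 := rfl
  have E1 : eta5 1 = 1 := rfl
  have E2 : eta5 2 = 1 := rfl
  have E3 : eta5 3 = 1 := rfl
  have E4 : eta5 4 = 1 := rfl
  simp only [mink2, wedge, mink5, Fin.sum_univ_five, E0, E1, E2, E3, E4]
  ring

lemma hasDerivAt_mink5 {f g f' g' : ℝ → Fin 5 → ℝ} {l : ℝ}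
    (hf : HasDerivAt f (f' l) l) (hg : HasDerivAt g (g' l) l) :
    HasDerivAt (fun l => mink5 (f l) (g l))
      (mink5 (f' l) (g l) + mink5 (f l) (g' l)) l := by
  have hfi := hasDerivAt_pi.mp hf
  have hgi := hasDerivAt_pi.mp hg
  have : HasDerivAt (fun l => mink5 (f l) (g l))
      (-((f' l 0 * g l 0 + f l 0 * g' l 0))
        + (f' l 1 * g l 1 + f l 1 * g' l 1)
        + (f' l 2 * g l 2 + f l 2 * g' l 2)
        + (f' l 3 * g l 3 + f l 3 * g' l 3)
        + (f' l 4 * g l 4 + f l 4 * g' l 4)) l := by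
    unfold mink5
    exact ((((((hfi 0).mul (hgi 0)).neg.add ((hfi 1).mul (hgi 1))).add
      ((hfi 2).mul (hgi 2))).add ((hfi 3).mul (hgi 3))).add ((hfi 4).mul (hgi 4)))
  convert this using 1
  unfold mink5; ring

/-- **Proposition on conformal torsion.** If `σ` is a smooth curve in
`ℝ⁵₁` with `⟨σ,σ⟩ = ⟨σ',σ'⟩ = ⟨σ'',σ''⟩ = 1` and `γ = σ ∧ σ'`, then
`⟨γ'',γ''⟩₂ = ⟨σ''',σ'''⟩ − 1`; hence the conformal torsion satisfies
`T = ⟨γ'',γ''⟩₂^{-1/4} = (⟨σ''',σ'''⟩ − 1)^{-1/4}`. -/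
theorem gamma_ddot_eq_sigma_dddot_sub_one
    (σ : ℝ → Fin 5 → ℝ) (hσ : ContDiff ℝ (⊤ : ℕ∞) σ)
    (h0 : ∀ l, mink5 (σ l) (σ l) = 1)
    (h1 : ∀ l, mink5 (deriv σ l) (deriv σ l) = 1)
    (h2 : ∀ l, mink5 (iteratedDeriv 2 σ l) (iteratedDeriv 2 σ l) = 1)
    (γ : ℝ → Fin 5 → Fin 5 → ℝ)
    (hγ : ∀ l, γ l = wedge (σ l) (deriv σ l)) :
    ∀ l : ℝ, mink2 (iteratedDeriv 2 γ l) (iteratedDeriv 2 γ l) =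
      mink5 (iteratedDeriv 3 σ l) (iteratedDeriv 3 σ l) - 1 := by
  -- derivatives of iterated derivatives
  have hd : ∀ (n : ℕ) (l : ℝ),
      HasDerivAt (iteratedDeriv n σ) (iteratedDeriv (n + 1) σ l) l := by
    intro n l
    have hdiff : Differentiable ℝ (iteratedDeriv n σ) :=
      hσ.differentiable_iteratedDeriv n (by exact_mod_cast ENat.natCast_lt_top n)
    rw [iteratedDeriv_succ]
    exact (hdiff l).hasDerivAt
  set s1 := deriv σ with hs1
  set s2 := iteratedDeriv 2 σ with hs2
  set s3 := iteratedDeriv 3 σ with hs3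
  have hd0 : ∀ l, HasDerivAt σ (s1 l) l := by
    intro l
    simpa only [iteratedDeriv_zero, zero_add, iteratedDeriv_one] using hd 0 l
  have hd1 : ∀ l, HasDerivAt s1 (s2 l) l := by
    intro l
    simpa only [iteratedDeriv_one, Nat.reduceAdd] using hd 1 l
  have hd2 : ∀ l, HasDerivAt s2 (s3 l) l := by
    intro l
    simpa only [Nat.reduceAdd] using hd 2 l
  -- pairing relations
  have p01 : ∀ l, mink5 (σ l) (s1 l) = 0 := by
    intro l
    have hD : HasDerivAt (fun l => mink5 (σ l) (σ l))
        (mink5 (s1 l) (σ l) + mink5 (σ l) (s1 l)) l :=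
      hasDerivAt_mink5 (hd0 l) (hd0 l)
    have hC : HasDerivAt (fun l => mink5 (σ l) (σ l)) 0 l := by
      have : (fun l => mink5 (σ l) (σ l)) = fun _ => (1:ℝ) := funext h0
      rw [this]; exact hasDerivAt_const l 1
    have := hD.unique hC
    have hsym : mink5 (s1 l) (σ l) = mink5 (σ l) (s1 l) := by unfold mink5; ring
    linarith [this, hsym.symm ▸ this]
  have p12 : ∀ l, mink5 (s1 l) (s2 l) = 0 := by
    intro l
    have hD : HasDerivAt (fun l => mink5 (s1 l) (s1 l))
        (mink5 (s2 l) (s1 l) + mink5 (s1 l) (s2 l)) l :=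
      hasDerivAt_mink5 (hd1 l) (hd1 l)
    have hC : HasDerivAt (fun l => mink5 (s1 l) (s1 l)) 0 l := by
      have : (fun l => mink5 (s1 l) (s1 l)) = fun _ => (1:ℝ) := funext h1
      rw [this]; exact hasDerivAt_const l 1
    have hu := hD.unique hC
    have hsym : mink5 (s2 l) (s1 l) = mink5 (s1 l) (s2 l) := by unfold mink5; ring
    linarith
  have p23 : ∀ l, mink5 (s2 l) (s3 l) = 0 := by
    intro l
    have hD : HasDerivAt (fun l => mink5 (s2 l) (s2 l))
        (mink5 (s3 l) (s2 l) + mink5 (s2 l) (s3 l)) l :=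
      hasDerivAt_mink5 (hd2 l) (hd2 l)
    have hC : HasDerivAt (fun l => mink5 (s2 l) (s2 l)) 0 l := by
      have : (fun l => mink5 (s2 l) (s2 l)) = fun _ => (1:ℝ) := funext h2
      rw [this]; exact hasDerivAt_const l 1
    have hu := hD.unique hC
    have hsym : mink5 (s3 l) (s2 l) = mink5 (s2 l) (s3 l) := by unfold mink5; ring
    linarith
  have p02 : ∀ l, mink5 (σ l) (s2 l) = -1 := by
    intro l
    have hD : HasDerivAt (fun l => mink5 (σ l) (s1 l))
        (mink5 (s1 l) (s1 l) + mink5 (σ l) (s2 l)) l :=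
      hasDerivAt_mink5 (hd0 l) (hd1 l)
    have hC : HasDerivAt (fun l => mink5 (σ l) (s1 l)) 0 l := by
      have : (fun l => mink5 (σ l) (s1 l)) = fun _ => (0:ℝ) := funext p01
      rw [this]; exact hasDerivAt_const l 0
    have hu := hD.unique hC
    have := h1 l
    linarith
  have p03 : ∀ l, mink5 (σ l) (s3 l) = 0 := by
    intro l
    have hD : HasDerivAt (fun l => mink5 (σ l) (s2 l))
        (mink5 (s1 l) (s2 l) + mink5 (σ l) (s3 l)) l :=
      hasDerivAt_mink5 (hd0 l) (hd2 l)
    have hC : HasDerivAt (fun l => mink5 (σ l) (s2 l)) 0 l := by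
      have : (fun l => mink5 (σ l) (s2 l)) = fun _ => (-1:ℝ) := funext p02
      rw [this]; exact hasDerivAt_const l (-1)
    have hu := hD.unique hC
    have := p12 l
    linarith
  have p13 : ∀ l, mink5 (s1 l) (s3 l) = -1 := by
    intro l
    have hD : HasDerivAt (fun l => mink5 (s1 l) (s2 l))
        (mink5 (s2 l) (s2 l) + mink5 (s1 l) (s3 l)) l :=
      hasDerivAt_mink5 (hd1 l) (hd2 l)
    have hC : HasDerivAt (fun l => mink5 (s1 l) (s2 l)) 0 l := by
      have : (fun l => mink5 (s1 l) (s2 l)) = fun _ => (0:ℝ) := funext p12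
      rw [this]; exact hasDerivAt_const l 0
    have hu := hD.unique hC
    have := h2 l
    linarith
  -- compute γ''
  have hg1 : ∀ l, HasDerivAt γ (wedge (σ l) (s2 l)) l := by
    intro l
    have key : HasDerivAt (fun l => wedge (σ l) (s1 l)) (wedge (σ l) (s2 l)) l := by
      rw [hasDerivAt_pi]; intro i
      rw [hasDerivAt_pi]; intro j
      have h0i := hasDerivAt_pi.mp (hd0 l) i
      have h0j := hasDerivAt_pi.mp (hd0 l) j
      have h1i := hasDerivAt_pi.mp (hd1 l) i
      have h1j := hasDerivAt_pi.mp (hd1 l) j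
      have hm := ((h0i.mul h1j).sub (h0j.mul h1i))
      unfold wedge
      convert hm using 1
      all_goals first | rfl | ring
    exact key.congr_of_eventuallyEq (Filter.Eventually.of_forall fun x => (hγ x))
  have hderivγ : deriv γ = fun l => wedge (σ l) (s2 l) := funext fun l => (hg1 l).deriv
  have hg2 : ∀ l, iteratedDeriv 2 γ l =
      fun i j => wedge (s1 l) (s2 l) i j + wedge (σ l) (s3 l) i j := by
    intro l
    have key : HasDerivAt (fun l => wedge (σ l) (s2 l))
        (fun i j => wedge (s1 l) (s2 l) i j + wedge (σ l) (s3 l) i j) l := by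
      rw [hasDerivAt_pi]; intro i
      rw [hasDerivAt_pi]; intro j
      have h0i := hasDerivAt_pi.mp (hd0 l) i
      have h0j := hasDerivAt_pi.mp (hd0 l) j
      have h2i := hasDerivAt_pi.mp (hd2 l) i
      have h2j := hasDerivAt_pi.mp (hd2 l) j
      have hm := ((h0i.mul h2j).sub (h0j.mul h2i))
      unfold wedge
      convert hm using 1
      all_goals first | rfl | ring
    have : iteratedDeriv 2 γ = deriv (deriv γ) := by
      rw [show (2:ℕ) = 1 + 1 from rfl, iteratedDeriv_succ, iteratedDeriv_one]
    rw [this, hderivγ]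
    exact key.deriv
  intro l
  rw [hg2 l, mink2_expand]
  have hsym : mink5 (s1 l) (σ l) = mink5 (σ l) (s1 l) := by unfold mink5; ring
  have hsym2 : mink5 (s2 l) (σ l) = mink5 (σ l) (s2 l) := by unfold mink5; ring
  rw [hsym, hsym2, h0 l, h1 l, h2 l, p01 l, p12 l, p23 l, p02 l, p03 l, p13 l]
  ring
end
end

section
/- Let σ : ℝ → ℝ⁵ be a C^∞ curve with ⟨σ, σ⟩ = 1, ⟨σ', σ'⟩ = 1, and ⟨σ'', σ''⟩ = 1 identically (derivatives with respect to l). If at some l₀ one has ⟨σ'''(l₀), σ'''(l₀)⟩ ≠ 1, then the five vectors σ(l₀), σ'(l₀), σ''(l₀), σ'''(l₀), σ⁽⁴⁾(l₀) are linearly independent (hence a basis of ℝ⁵). -/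
noncomputable section

lemma mink5_hasDerivAt {f g : ℝ → Fin 5 → ℝ} {f' g' : Fin 5 → ℝ} {l : ℝ}
    (hf : HasDerivAt f f' l) (hg : HasDerivAt g g' l) :
    HasDerivAt (fun t => mink5 (f t) (g t)) (mink5 f' (g l) + mink5 (f l) g') l := by
  have hfi : ∀ i, HasDerivAt (fun t => f t i) (f' i) l := hasDerivAt_pi.mp hf
  have hgi : ∀ i, HasDerivAt (fun t => g t i) (g' i) l := hasDerivAt_pi.mp hg
  have h := ((((((hfi 0).mul (hgi 0)).neg.add ((hfi 1).mul (hgi 1))).add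
      ((hfi 2).mul (hgi 2))).add ((hfi 3).mul (hgi 3))).add ((hfi 4).mul (hgi 4)))
  convert h using 1
  all_goals first | rfl | (simp only [mink5]; ring)

lemma deriv_zero_of_const {f : ℝ → ℝ} {c d : ℝ} {l : ℝ}
    (hf : ∀ x, f x = c) (h : HasDerivAt f d l) : d = 0 := by
  have hfc : f = fun _ => c := funext hf
  exact h.unique (hfc ▸ hasDerivAt_const l c)

lemma mink5_comm (x y : Fin 5 → ℝ) : mink5 x y = mink5 y x := by
  unfold mink5; ring

/-- **Lemma on linear independence.** For a curve `σ` of osculating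
spheres with `⟨σ,σ⟩ = ⟨σ',σ'⟩ = ⟨σ'',σ''⟩ = 1`, if `⟨σ''',σ'''⟩ ≠ 1` at `l₀` (which
corresponds to the nonvanishing of `dl/dρ`), then `σ, σ', σ'', σ''', σ⁽⁴⁾` are linearly
independent at `l₀`, hence a basis of `ℝ⁵`. -/
theorem five_derivatives_linearly_independent
    (σ : ℝ → Fin 5 → ℝ) (hσ : ContDiff ℝ (⊤ : ℕ∞) σ)
    (h0 : ∀ l, mink5 (σ l) (σ l) = 1)
    (h1 : ∀ l, mink5 (deriv σ l) (deriv σ l) = 1)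
    (h2 : ∀ l, mink5 (iteratedDeriv 2 σ l) (iteratedDeriv 2 σ l) = 1)
    (l₀ : ℝ)
    (h3 : mink5 (iteratedDeriv 3 σ l₀) (iteratedDeriv 3 σ l₀) ≠ 1) :
    LinearIndependent ℝ
      ![σ l₀, deriv σ l₀, iteratedDeriv 2 σ l₀, iteratedDeriv 3 σ l₀,
        iteratedDeriv 4 σ l₀] := by
  set D : ℕ → ℝ → Fin 5 → ℝ := fun k => iteratedDeriv k σ with hD
  have e0 : σ = D 0 := by rw [hD]; exact (iteratedDeriv_zero (f := σ)).symm
  have e1 : deriv σ = D 1 := by rw [hD]; exact (iteratedDeriv_one (f := σ)).symm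
  have e2 : iteratedDeriv 2 σ = D 2 := by rw [hD]
  have e3 : iteratedDeriv 3 σ = D 3 := by rw [hD]
  have e4 : iteratedDeriv 4 σ = D 4 := by rw [hD]
  rw [e0] at h0
  rw [e1] at h1
  rw [e2] at h2
  rw [e3] at h3
  rw [e1, e2, e3, e4, e0]
  have hDer : ∀ (k : ℕ) (l : ℝ), HasDerivAt (D k) (D (k + 1) l) l := by
    intro k l
    have hdiff : Differentiable ℝ (D k) := by
      rw [hD]
      exact hσ.differentiable_iteratedDeriv k (by exact_mod_cast ENat.coe_lt_top k)
    have h := (hdiff l).hasDerivAt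
    have hsucc : deriv (D k) = D (k + 1) := by
      rw [hD]
      exact (iteratedDeriv_succ (n := k) (f := σ)).symm
    rwa [hsucc] at h
  have step : ∀ (i j : ℕ) (c : ℝ), (∀ l, mink5 (D i l) (D j l) = c) →
      ∀ l, mink5 (D (i+1) l) (D j l) + mink5 (D i l) (D (j+1) l) = 0 := by
    intro i j c hij l
    exact deriv_zero_of_const hij (mink5_hasDerivAt (hDer i l) (hDer j l))
  have p01 : ∀ l, mink5 (D 0 l) (D 1 l) = 0 := by
    intro l
    have h := step 0 0 1 h0 l
    rw [mink5_comm (D 1 l) (D 0 l)] at h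
    linarith
  have p02 : ∀ l, mink5 (D 0 l) (D 2 l) = -1 := by
    intro l
    have h := step 0 1 0 p01 l
    rw [mink5_comm (D 1 l) (D 1 l)] at h
    have := h1 l
    linarith
  have p12 : ∀ l, mink5 (D 1 l) (D 2 l) = 0 := by
    intro l
    have h := step 1 1 1 h1 l
    rw [mink5_comm (D 2 l) (D 1 l)] at h
    linarith
  have p03 : ∀ l, mink5 (D 0 l) (D 3 l) = 0 := by
    intro l
    have h := step 0 2 (-1) p02 l
    norm_num at h
    have := p12 l
    linarith
  have p13 : ∀ l, mink5 (D 1 l) (D 3 l) = -1 := by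
    intro l
    have h := step 1 2 0 p12 l
    rw [mink5_comm (D 2 l) (D 2 l)] at h
    have := h2 l
    linarith
  have p23 : ∀ l, mink5 (D 2 l) (D 3 l) = 0 := by
    intro l
    have h := step 2 2 1 h2 l
    rw [mink5_comm (D 3 l) (D 2 l)] at h
    linarith
  have p04 : ∀ l, mink5 (D 0 l) (D 4 l) = 1 := by
    intro l
    have h := step 0 3 0 p03 l
    norm_num at h
    have := p13 l
    linarith
  have p14 : ∀ l, mink5 (D 1 l) (D 4 l) = 0 := by
    intro l
    have h := step 1 3 (-1) p13 l
    norm_num at h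
    have := p23 l
    linarith
  have p24 : ∀ l, mink5 (D 2 l) (D 4 l) = -(mink5 (D 3 l) (D 3 l)) := by
    intro l
    have h := step 2 3 0 p23 l
    norm_num at h
    linarith
  rw [Fintype.linearIndependent_iff]
  intro c hc
  have E : ∀ k : Fin 5, c 0 * D 0 l₀ k + c 1 * D 1 l₀ k + c 2 * D 2 l₀ k
      + c 3 * D 3 l₀ k + c 4 * D 4 l₀ k = 0 := by
    intro k
    have h := congrFun hc k
    rw [Fin.sum_univ_five] at h
    simpa [Matrix.cons_val_zero, Matrix.cons_val_one, mul_comm] using h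
  have hw : ∀ j : ℕ, c 0 * mink5 (D 0 l₀) (D j l₀)
      + c 1 * mink5 (D 1 l₀) (D j l₀) + c 2 * mink5 (D 2 l₀) (D j l₀)
      + c 3 * mink5 (D 3 l₀) (D j l₀) + c 4 * mink5 (D 4 l₀) (D j l₀) = 0 := by
    intro j
    have E0 := E 0; have E1 := E 1; have E2 := E 2; have E3 := E 3; have E4 := E 4
    simp only [mink5]
    linear_combination (-(D j l₀ 0)) * E0 + (D j l₀ 1) * E1 + (D j l₀ 2) * E2
      + (D j l₀ 3) * E3 + (D j l₀ 4) * E4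
  set A := mink5 (D 3 l₀) (D 3 l₀) with hA
  set B := mink5 (D 3 l₀) (D 4 l₀) with hB
  set C := mink5 (D 4 l₀) (D 4 l₀) with hC
  have eq0 : c 0 - c 2 + c 4 = 0 := by
    have h := hw 0
    rw [mink5_comm (D 1 l₀) (D 0 l₀), mink5_comm (D 2 l₀) (D 0 l₀),
      mink5_comm (D 3 l₀) (D 0 l₀), mink5_comm (D 4 l₀) (D 0 l₀),
      h0 l₀, p01 l₀, p02 l₀, p03 l₀, p04 l₀] at h
    linarith
  have eq1 : c 1 - c 3 = 0 := by
    have h := hw 1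
    rw [mink5_comm (D 2 l₀) (D 1 l₀), mink5_comm (D 3 l₀) (D 1 l₀),
      mink5_comm (D 4 l₀) (D 1 l₀),
      p01 l₀, h1 l₀, p12 l₀, p13 l₀, p14 l₀] at h
    linarith
  have eq2 : -c 0 + c 2 - A * c 4 = 0 := by
    have h := hw 2
    rw [mink5_comm (D 3 l₀) (D 2 l₀), mink5_comm (D 4 l₀) (D 2 l₀),
      p02 l₀, p12 l₀, h2 l₀, p23 l₀, p24 l₀, ← hA] at h
    linarith
  have eq3 : -c 1 + A * c 3 + B * c 4 = 0 := by
    have h := hw 3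
    rw [mink5_comm (D 4 l₀) (D 3 l₀),
      p03 l₀, p13 l₀, p23 l₀, ← hA, ← hB] at h
    linarith
  have eq4 : c 0 - A * c 2 + B * c 3 + C * c 4 = 0 := by
    have h := hw 4
    rw [p04 l₀, p14 l₀, p24 l₀, ← hA, ← hB, ← hC] at h
    linarith
  have hAne : A - 1 ≠ 0 := sub_ne_zero.mpr h3
  have hc4 : c 4 = 0 := by
    have h : (A - 1) * c 4 = 0 := by linear_combination -eq0 - eq2
    exact (mul_eq_zero.mp h).resolve_left hAne
  have hc3 : c 3 = 0 := by
    have h : (A - 1) * c 3 = 0 := by linear_combination eq3 + eq1 - B * hc4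
    exact (mul_eq_zero.mp h).resolve_left hAne
  have hc1 : c 1 = 0 := by linarith
  have hc0 : c 0 = 0 := by
    have h : (A - 1) * c 0 = 0 := by
      linear_combination -eq4 - A * eq2 + B * hc3 + (C - A ^ 2) * hc4
    exact (mul_eq_zero.mp h).resolve_left hAne
  have hc2 : c 2 = 0 := by linarith
  intro i
  fin_cases i <;> assumption
end
end

section
/- Let σ : ℝ → ℝ⁵ be a C^∞ curve with ⟨σ, σ⟩ = 1 and ⟨σ', σ'⟩ = 1 identically (a unit-speed curve in de Sitter space Λ⁴), and let γ(l) = σ(l) ∧ σ'(l) ∈ ⋀²ℝ⁵. Then the geodesic curvature vector k_g = σ + σ'' satisfies ⟨k_g(l), k_g(l)⟩ = ⟨γ'(l), γ'(l)⟩₂ for all l. In particular, the canal surface enveloped by σ is of time-like, space-like, or light-like type exactly according to the causal type of the curve of characteristic circles γ. -/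
noncomputable section

lemma eta5_zero : eta5 0 = -1 := by simp [eta5]
lemma eta5_one : eta5 1 = 1 := by norm_num [eta5, Fin.ext_iff]
lemma eta5_two : eta5 2 = 1 := by norm_num [eta5, Fin.ext_iff]
lemma eta5_three : eta5 3 = 1 := by rw [eta5, if_neg (by decide)]
lemma eta5_four : eta5 4 = 1 := by rw [eta5, if_neg (by decide)]

/-- Lagrange-type identity for the Plücker form. -/
lemma mink2_wedge (a c : Fin 5 → ℝ) :
    mink2 (wedge a c) (wedge a c) = mink5 a a * mink5 c c - (mink5 a c) ^ 2 := by
  simp only [mink2, wedge, mink5, Fin.sum_univ_five, eta5_zero, eta5_one, eta5_two,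
    eta5_three, eta5_four]
  ring

lemma mink5_add (a c : Fin 5 → ℝ) :
    mink5 (a + c) (a + c) = mink5 a a + 2 * mink5 a c + mink5 c c := by
  simp only [mink5, Pi.add_apply]; ring

/-- Leibniz rule for `mink5` along two curves. -/
lemma mink5_hasDerivAt_s7 {u v : ℝ → Fin 5 → ℝ} {u' v' : Fin 5 → ℝ} {l : ℝ}
    (hu : ∀ i, HasDerivAt (fun x => u x i) (u' i) l)
    (hv : ∀ i, HasDerivAt (fun x => v x i) (v' i) l) :
    HasDerivAt (fun x => mink5 (u x) (v x)) (mink5 u' (v l) + mink5 (u l) v') l := by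
  have H := (((((hu 0).mul (hv 0)).neg.add ((hu 1).mul (hv 1))).add
      ((hu 2).mul (hv 2))).add ((hu 3).mul (hv 3))).add ((hu 4).mul (hv 4))
  have : HasDerivAt (fun x => mink5 (u x) (v x))
      (-(u' 0 * v l 0 + u l 0 * v' 0) + (u' 1 * v l 1 + u l 1 * v' 1) +
        (u' 2 * v l 2 + u l 2 * v' 2) + (u' 3 * v l 3 + u l 3 * v' 3) +
        (u' 4 * v l 4 + u l 4 * v' 4)) l := by
    have hf : (fun x => mink5 (u x) (v x)) = ((((-((fun x => u x 0) * fun x => v x 0) +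
        (fun x => u x 1) * fun x => v x 1) + (fun x => u x 2) * fun x => v x 2) +
        (fun x => u x 3) * fun x => v x 3) + (fun x => u x 4) * fun x => v x 4) := by
      funext x; simp [mink5]
    rw [hf]; exact H
  convert this using 1
  simp [mink5]; ring

/-- Componentwise derivative of a differentiable curve in `Fin n → ℝ`. -/
lemma hasDerivAt_comp_proj {n : ℕ} {g : ℝ → Fin n → ℝ} (hg : Differentiable ℝ g)
    (l : ℝ) (i : Fin n) : HasDerivAt (fun x => g x i) (deriv g l i) l :=
  hasDerivAt_pi.mp (hg l).hasDerivAt i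

/-- **Canal surfaces proposition.** For a smooth unit-speed curve `σ` in de
Sitter space `Λ⁴ ⊂ ℝ⁵₁` (`⟨σ,σ⟩ = 1`, `⟨σ',σ'⟩ = 1`), with curve of characteristic
circles `γ = σ ∧ σ'`, the geodesic curvature vector `k_g = σ + σ''` satisfies
`⟨k_g, k_g⟩ = ⟨γ',γ'⟩₂`; so the type (time-like/space-like/light-like) of the canal
surface enveloped by `σ` matches the causal type of `γ`. -/
theorem canal_surface_causal_type
    (σ : ℝ → Fin 5 → ℝ) (hσ : ContDiff ℝ (⊤ : ℕ∞) σ)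
    (h0 : ∀ l, mink5 (σ l) (σ l) = 1)
    (h1 : ∀ l, mink5 (deriv σ l) (deriv σ l) = 1)
    (γ : ℝ → Fin 5 → Fin 5 → ℝ)
    (hγ : ∀ l, γ l = wedge (σ l) (deriv σ l))
    (kg : ℝ → Fin 5 → ℝ)
    (hkg : ∀ l, kg l = σ l + iteratedDeriv 2 σ l) :
    ∀ l : ℝ, mink5 (kg l) (kg l) = mink2 (deriv γ l) (deriv γ l) := by
  have hσd : Differentiable ℝ σ := hσ.differentiable (by simp)
  have hS : ContDiff ℝ ((⊤:ℕ∞) : WithTop ℕ∞) σ := hσ.of_le (by simp)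
  have hσ' : ContDiff ℝ (⊤:ℕ∞) (deriv σ) := (contDiff_infty_iff_deriv.mp hS).2
  have hσ'd : Differentiable ℝ (deriv σ) := hσ'.differentiable (by simp)
  -- second derivative
  have h2 : iteratedDeriv 2 σ = deriv (deriv σ) := by
    rw [iteratedDeriv_succ, iteratedDeriv_one]
  -- componentwise derivatives
  have hc1 : ∀ l i, HasDerivAt (fun x => σ x i) (deriv σ l i) l :=
    fun l i => hasDerivAt_comp_proj hσd l i
  have hc2 : ∀ l i, HasDerivAt (fun x => deriv σ x i) (deriv (deriv σ) l i) l :=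
    fun l i => hasDerivAt_comp_proj hσ'd l i
  -- ⟨σ,σ'⟩ = 0
  have horth : ∀ l, mink5 (σ l) (deriv σ l) = 0 := by
    intro l
    have hD : HasDerivAt (fun x => mink5 (σ x) (σ x))
        (mink5 (deriv σ l) (σ l) + mink5 (σ l) (deriv σ l)) l :=
      mink5_hasDerivAt_s7 (hc1 l) (hc1 l)
    have hconst : HasDerivAt (fun x => mink5 (σ x) (σ x)) 0 l := by
      have : (fun x => mink5 (σ x) (σ x)) = fun _ => (1 : ℝ) := funext h0
      rw [this]; exact hasDerivAt_const l 1
    have := hD.unique hconst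
    have hsymm : mink5 (deriv σ l) (σ l) = mink5 (σ l) (deriv σ l) := by
      simp [mink5]; ring
    linarith [this, hsymm.symm ▸ this]
  -- ⟨σ,σ''⟩ = -1
  have hsec : ∀ l, mink5 (σ l) (deriv (deriv σ) l) = -1 := by
    intro l
    have hD : HasDerivAt (fun x => mink5 (σ x) (deriv σ x))
        (mink5 (deriv σ l) (deriv σ l) + mink5 (σ l) (deriv (deriv σ) l)) l :=
      mink5_hasDerivAt_s7 (hc1 l) (hc2 l)
    have hconst : HasDerivAt (fun x => mink5 (σ x) (deriv σ x)) 0 l := by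
      have : (fun x => mink5 (σ x) (deriv σ x)) = fun _ => (0 : ℝ) := funext horth
      rw [this]; exact hasDerivAt_const l 0
    have := hD.unique hconst
    have h1l := h1 l
    linarith
  -- derivative of γ
  have hγ' : ∀ l, deriv γ l = wedge (σ l) (deriv (deriv σ) l) := by
    intro l
    have hfun : γ = fun x => wedge (σ x) (deriv σ x) := funext hγ
    have : HasDerivAt γ (wedge (σ l) (deriv (deriv σ) l)) l := by
      rw [hfun]
      apply hasDerivAt_pi.mpr
      intro i
      apply hasDerivAt_pi.mpr
      intro j
      simp only [wedge]
      have h := ((hc1 l i).mul (hc2 l j)).sub ((hc1 l j).mul (hc2 l i))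
      convert h using 1
      · rfl
      ring
    exact this.deriv
  intro l
  rw [hkg l, h2, mink5_add, hγ' l, mink2_wedge]
  have e1 := h0 l
  have e2 := hsec l
  linear_combination (1 - mink5 (deriv (deriv σ) l) (deriv (deriv σ) l)) * e1 +
    (mink5 (σ l) (deriv (deriv σ) l) + 1) * e2
end
end

section
/- Let n, v₁, v₂, v₃, n* : ℝ → ℝ⁵ be C^∞ and Q, T : ℝ → ℝ be C^∞, satisfying for all ρ the Frenet system n' = v₁, v₁' = Q·n + n*, v₂' = n + T·v₃, v₃' = −T·v₂, (n*)' = Q·v₁ + v₂, and satisfying at ρ = 0 the isotropic orthonormality conditions ⟨n,n⟩ = ⟨n*,n*⟩ = 0, ⟨n,n*⟩ = −1, ⟨vᵢ,vⱼ⟩ = δᵢⱼ (i,j ∈ {1,2,3}), ⟨n,vᵢ⟩ = ⟨n*,vᵢ⟩ = 0. Then the function h(ρ) = ⟨n(ρ), v₂(0)⟩ satisfies h(0) = h'(0) = h''(0) = 0, h'''(0) = 1, h⁽⁴⁾(0) = 0, h⁽⁵⁾(0) = 2Q(0) − T(0)², and the function g(ρ) = ⟨n(ρ), v₃(0)⟩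 satisfies g(0) = g'(0) = g''(0) = g'''(0) = 0, g⁽⁴⁾(0) = T(0), g⁽⁵⁾(0) = T'(0). (These give the expansions y = ρ³/3! + (2Q − T²)ρ⁵/5! + … and z = Tρ⁴/4! + T'ρ⁵/5! + … underlying the conformal normal form y = x³/3! + (2Q − T²)x⁵/5! + O(x⁶), z = Tx⁴/4! + T'x⁵/5! + O(x⁶).) -/
noncomputable section

def mkW (w : Fin 5 → ℝ) : (Fin 5 → ℝ) →L[ℝ] ℝ :=
  (-(w 0)) • ContinuousLinearMap.proj 0 + (w 1) • ContinuousLinearMap.proj 1 +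
  (w 2) • ContinuousLinearMap.proj 2 + (w 3) • ContinuousLinearMap.proj 3 +
  (w 4) • ContinuousLinearMap.proj 4

lemma mkW_apply (w x : Fin 5 → ℝ) : mkW w x = mink5 x w := by
  simp [mkW, mink5]; ring

lemma key_taylor
    (n v₁ v₂ v₃ nst : ℝ → Fin 5 → ℝ) (Q T : ℝ → ℝ)
    (hn : ContDiff ℝ (⊤ : ℕ∞) n) (hv₁ : ContDiff ℝ (⊤ : ℕ∞) v₁) (hv₂ : ContDiff ℝ (⊤ : ℕ∞) v₂)
    (hv₃ : ContDiff ℝ (⊤ : ℕ∞) v₃) (hnst : ContDiff ℝ (⊤ : ℕ∞) nst)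
    (hQ : ContDiff ℝ (⊤ : ℕ∞) Q) (hT : ContDiff ℝ (⊤ : ℕ∞) T)
    (e1 : ∀ ρ, deriv n ρ = v₁ ρ)
    (e2 : ∀ ρ, deriv v₁ ρ = Q ρ • n ρ + nst ρ)
    (e3 : ∀ ρ, deriv v₂ ρ = n ρ + T ρ • v₃ ρ)
    (e4 : ∀ ρ, deriv v₃ ρ = -(T ρ) • v₂ ρ)
    (e5 : ∀ ρ, deriv nst ρ = Q ρ • v₁ ρ + v₂ ρ)
    (w : Fin 5 → ℝ) (m2 m3 : ℝ)
    (w0 : mink5 (n 0) w = 0) (w1 : mink5 (v₁ 0) w = 0) (w2 : mink5 (v₂ 0) w = m2)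
    (w3 : mink5 (v₃ 0) w = m3) (w4 : mink5 (nst 0) w = 0)
    (f : ℝ → ℝ) (hf : ∀ ρ, f ρ = mink5 (n ρ) w) :
    f 0 = 0 ∧ deriv f 0 = 0 ∧ iteratedDeriv 2 f 0 = 0 ∧
    iteratedDeriv 3 f 0 = m2 ∧ iteratedDeriv 4 f 0 = T 0 * m3 ∧
    iteratedDeriv 5 f 0 = (2 * Q 0 - T 0 ^ 2) * m2 + deriv T 0 * m3 := by
  have hdn : ∀ ρ, HasDerivAt n (v₁ ρ) ρ := fun ρ => e1 ρ ▸ (hn.differentiable (by simp) ρ).hasDerivAt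
  have hdv₁ : ∀ ρ, HasDerivAt v₁ (Q ρ • n ρ + nst ρ) ρ :=
    fun ρ => e2 ρ ▸ (hv₁.differentiable (by simp) ρ).hasDerivAt
  have hdv₂ : ∀ ρ, HasDerivAt v₂ (n ρ + T ρ • v₃ ρ) ρ :=
    fun ρ => e3 ρ ▸ (hv₂.differentiable (by simp) ρ).hasDerivAt
  have hdv₃ : ∀ ρ, HasDerivAt v₃ (-(T ρ) • v₂ ρ) ρ :=
    fun ρ => e4 ρ ▸ (hv₃.differentiable (by simp) ρ).hasDerivAt
  have hdnst : ∀ ρ, HasDerivAt nst (Q ρ • v₁ ρ + v₂ ρ) ρ :=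
    fun ρ => e5 ρ ▸ (hnst.differentiable (by simp) ρ).hasDerivAt
  have hQd : ∀ ρ, HasDerivAt Q (deriv Q ρ) ρ := fun ρ => (hQ.differentiable (by simp) ρ).hasDerivAt
  have hQinf : ContDiff ℝ (⊤ : ℕ∞) Q := hQ.of_le (by simp)
  have hQ1 : ContDiff ℝ (⊤ : ℕ∞) (deriv Q) := (contDiff_infty_iff_deriv.mp hQinf).2
  have hQd1 : ∀ ρ, HasDerivAt (deriv Q) (deriv (deriv Q) ρ) ρ :=
    fun ρ => (hQ1.differentiable (by simp) ρ).hasDerivAt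
  have hQ2 : ContDiff ℝ (⊤ : ℕ∞) (deriv (deriv Q)) := (contDiff_infty_iff_deriv.mp hQ1).2
  have hQd2 : ∀ ρ, HasDerivAt (deriv (deriv Q)) (deriv (deriv (deriv Q)) ρ) ρ :=
    fun ρ => (hQ2.differentiable (by simp) ρ).hasDerivAt
  have hTd : ∀ ρ, HasDerivAt T (deriv T ρ) ρ := fun ρ => (hT.differentiable (by simp) ρ).hasDerivAt
  set A0 : ℝ → ℝ := fun ρ => mkW w (n ρ) with hA0
  set A1 : ℝ → ℝ := fun ρ => mkW w (v₁ ρ) with hA1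
  set A2 : ℝ → ℝ := fun ρ => mkW w (v₂ ρ) with hA2
  set A3 : ℝ → ℝ := fun ρ => mkW w (v₃ ρ) with hA3
  set A4 : ℝ → ℝ := fun ρ => mkW w (nst ρ) with hA4
  have hfA : f = A0 := funext fun ρ => by rw [hf]; exact (mkW_apply w (n ρ)).symm
  have hd0 : ∀ ρ, HasDerivAt A0 (A1 ρ) ρ :=
    fun ρ => (mkW w).hasFDerivAt.comp_hasDerivAt ρ (hdn ρ)
  have hd1 : ∀ ρ, HasDerivAt A1 (Q ρ * A0 ρ + A4 ρ) ρ := fun ρ => by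
    have := (mkW w).hasFDerivAt.comp_hasDerivAt ρ (hdv₁ ρ)
    simp [hA0, hA1, hA4, Function.comp] at this; exact this
  have hd2 : ∀ ρ, HasDerivAt A2 (A0 ρ + T ρ * A3 ρ) ρ := fun ρ => by
    have := (mkW w).hasFDerivAt.comp_hasDerivAt ρ (hdv₂ ρ)
    simp [hA0, hA2, hA3, Function.comp] at this; exact this
  have hd3 : ∀ ρ, HasDerivAt A3 (-(T ρ * A2 ρ)) ρ := fun ρ => by
    have := (mkW w).hasFDerivAt.comp_hasDerivAt ρ (hdv₃ ρ)
    simp [hA2, hA3, Function.comp] at this; exact this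
  have hd4 : ∀ ρ, HasDerivAt A4 (Q ρ * A1 ρ + A2 ρ) ρ := fun ρ => by
    have := (mkW w).hasFDerivAt.comp_hasDerivAt ρ (hdnst ρ)
    simp [hA1, hA2, hA4, Function.comp] at this; exact this
  have vA0 : A0 0 = 0 := by rw [hA0]; show mkW w (n 0) = 0; rw [mkW_apply]; exact w0
  have vA1 : A1 0 = 0 := by rw [hA1]; show mkW w (v₁ 0) = 0; rw [mkW_apply]; exact w1
  have vA2 : A2 0 = m2 := by rw [hA2]; show mkW w (v₂ 0) = m2; rw [mkW_apply]; exact w2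
  have vA3 : A3 0 = m3 := by rw [hA3]; show mkW w (v₃ 0) = m3; rw [mkW_apply]; exact w3
  have vA4 : A4 0 = 0 := by rw [hA4]; show mkW w (nst 0) = 0; rw [mkW_apply]; exact w4
  have df : deriv f = A1 := by rw [hfA]; exact funext fun ρ => (hd0 ρ).deriv
  have dA1 : deriv A1 = fun ρ => Q ρ * A0 ρ + A4 ρ := funext fun ρ => (hd1 ρ).deriv
  have hdD2 : ∀ ρ, HasDerivAt (fun ρ => Q ρ * A0 ρ + A4 ρ)
      (deriv Q ρ * A0 ρ + Q ρ * A1 ρ + (Q ρ * A1 ρ + A2 ρ)) ρ :=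
    fun ρ => ((hQd ρ).mul (hd0 ρ)).add (hd4 ρ)
  have dD2 : deriv (fun ρ => Q ρ * A0 ρ + A4 ρ) =
      fun ρ => deriv Q ρ * A0 ρ + Q ρ * A1 ρ + (Q ρ * A1 ρ + A2 ρ) :=
    funext fun ρ => (hdD2 ρ).deriv
  have hdD3 : ∀ ρ, HasDerivAt (fun ρ => deriv Q ρ * A0 ρ + Q ρ * A1 ρ + (Q ρ * A1 ρ + A2 ρ))
      ((deriv (deriv Q) ρ * A0 ρ + deriv Q ρ * A1 ρ +
        (deriv Q ρ * A1 ρ + Q ρ * (Q ρ * A0 ρ + A4 ρ))) +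
       (deriv Q ρ * A1 ρ + Q ρ * (Q ρ * A0 ρ + A4 ρ) + (A0 ρ + T ρ * A3 ρ))) ρ :=
    fun ρ => (((hQd1 ρ).mul (hd0 ρ)).add ((hQd ρ).mul (hd1 ρ))).add
      (((hQd ρ).mul (hd1 ρ)).add (hd2 ρ))
  have dD3 : deriv (fun ρ => deriv Q ρ * A0 ρ + Q ρ * A1 ρ + (Q ρ * A1 ρ + A2 ρ)) =
      fun ρ => (deriv (deriv Q) ρ * A0 ρ + deriv Q ρ * A1 ρ +
        (deriv Q ρ * A1 ρ + Q ρ * (Q ρ * A0 ρ + A4 ρ))) +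
       (deriv Q ρ * A1 ρ + Q ρ * (Q ρ * A0 ρ + A4 ρ) + (A0 ρ + T ρ * A3 ρ)) :=
    funext fun ρ => (hdD3 ρ).deriv
  have hdD4 : HasDerivAt (fun ρ => (deriv (deriv Q) ρ * A0 ρ + deriv Q ρ * A1 ρ +
        (deriv Q ρ * A1 ρ + Q ρ * (Q ρ * A0 ρ + A4 ρ))) +
       (deriv Q ρ * A1 ρ + Q ρ * (Q ρ * A0 ρ + A4 ρ) + (A0 ρ + T ρ * A3 ρ))) _ 0 :=
    ((((hQd2 0).mul (hd0 0)).add ((hQd1 0).mul (hd1 0))).add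
      (((hQd1 0).mul (hd1 0)).add ((hQd 0).mul (hdD2 0)))).add
     ((((hQd1 0).mul (hd1 0)).add ((hQd 0).mul (hdD2 0))).add
      ((hd0 0).add ((hTd 0).mul (hd3 0))))
  refine ⟨?_, ?_, ?_, ?_, ?_, ?_⟩
  · rw [hfA]; exact vA0
  · rw [df]; exact vA1
  · rw [show (2 : ℕ) = 1 + 1 from rfl, iteratedDeriv_succ, iteratedDeriv_one, df,
      (hd1 0).deriv, vA0, vA4]; ring
  · rw [show (3 : ℕ) = 1 + 1 + 1 from rfl, iteratedDeriv_succ, iteratedDeriv_succ,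
      iteratedDeriv_one, df, dA1, (hdD2 0).deriv]; simp only [vA0, vA1, vA2, vA3, vA4]; ring
  · rw [show (4 : ℕ) = 1 + 1 + 1 + 1 from rfl, iteratedDeriv_succ, iteratedDeriv_succ,
      iteratedDeriv_succ, iteratedDeriv_one, df, dA1, dD2, (hdD3 0).deriv]; simp only [vA0, vA1, vA2, vA3, vA4]; ring
  · rw [show (5 : ℕ) = 1 + 1 + 1 + 1 + 1 from rfl, iteratedDeriv_succ, iteratedDeriv_succ,
      iteratedDeriv_succ, iteratedDeriv_succ, iteratedDeriv_one, df, dA1, dD2, dD3,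
      hdD4.deriv]; simp only [vA0, vA1, vA2, vA3, vA4]; ring

/-- For a moving frame `(n, v₁, v₂, v₃, n*)` satisfying the conformal
Frenet system with conformal curvature `Q` and torsion `T`, isotropic orthonormal at
`ρ = 0`, the scalar functions `h(ρ) = ⟨n(ρ), v₂(0)⟩` and `g(ρ) = ⟨n(ρ), v₃(0)⟩` have the
Taylor data `h(0) = h'(0) = h''(0) = 0`, `h'''(0) = 1`, `h⁽⁴⁾(0) = 0`,
`h⁽⁵⁾(0) = 2Q(0) - T(0)²` and `g(0) = g'(0) = g''(0) = g'''(0) = 0`, `g⁽⁴⁾(0) = T(0)`,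
`g⁽⁵⁾(0) = T'(0)`, giving the expansions `y = ρ³/3! + (2Q-T²)ρ⁵/5! + …` and
`z = Tρ⁴/4! + T'ρ⁵/5! + …` underlying the conformal normal form. -/
theorem normal_form_expansion_y_and_z
    (n v₁ v₂ v₃ nst : ℝ → Fin 5 → ℝ) (Q T : ℝ → ℝ)
    (hn : ContDiff ℝ (⊤ : ℕ∞) n) (hv₁ : ContDiff ℝ (⊤ : ℕ∞) v₁) (hv₂ : ContDiff ℝ (⊤ : ℕ∞) v₂)
    (hv₃ : ContDiff ℝ (⊤ : ℕ∞) v₃) (hnst : ContDiff ℝ (⊤ : ℕ∞) nst)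
    (hQ : ContDiff ℝ (⊤ : ℕ∞) Q) (hT : ContDiff ℝ (⊤ : ℕ∞) T)
    (e1 : ∀ ρ, deriv n ρ = v₁ ρ)
    (e2 : ∀ ρ, deriv v₁ ρ = Q ρ • n ρ + nst ρ)
    (e3 : ∀ ρ, deriv v₂ ρ = n ρ + T ρ • v₃ ρ)
    (e4 : ∀ ρ, deriv v₃ ρ = -(T ρ) • v₂ ρ)
    (e5 : ∀ ρ, deriv nst ρ = Q ρ • v₁ ρ + v₂ ρ)
    (onn : mink5 (n 0) (n 0) = 0)
    (onstnst : mink5 (nst 0) (nst 0) = 0)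
    (onnst : mink5 (n 0) (nst 0) = -1)
    (ovv : ∀ i j : Fin 3,
      mink5 (![v₁, v₂, v₃] i 0) (![v₁, v₂, v₃] j 0) = if i = j then 1 else 0)
    (onv : ∀ i : Fin 3, mink5 (n 0) (![v₁, v₂, v₃] i 0) = 0)
    (onstv : ∀ i : Fin 3, mink5 (nst 0) (![v₁, v₂, v₃] i 0) = 0)
    (h g : ℝ → ℝ)
    (hh : ∀ ρ, h ρ = mink5 (n ρ) (v₂ 0))
    (hg : ∀ ρ, g ρ = mink5 (n ρ) (v₃ 0)) :
    h 0 = 0 ∧ deriv h 0 = 0 ∧ iteratedDeriv 2 h 0 = 0 ∧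
      iteratedDeriv 3 h 0 = 1 ∧ iteratedDeriv 4 h 0 = 0 ∧
      iteratedDeriv 5 h 0 = 2 * Q 0 - T 0 ^ 2 ∧
    g 0 = 0 ∧ deriv g 0 = 0 ∧ iteratedDeriv 2 g 0 = 0 ∧
      iteratedDeriv 3 g 0 = 0 ∧ iteratedDeriv 4 g 0 = T 0 ∧
      iteratedDeriv 5 g 0 = deriv T 0 := by
  have pn2 : mink5 (n 0) (v₂ 0) = 0 := by simpa using onv 1
  have p12 : mink5 (v₁ 0) (v₂ 0) = 0 := by simpa using ovv 0 1
  have p22 : mink5 (v₂ 0) (v₂ 0) = 1 := by simpa using ovv 1 1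
  have p32 : mink5 (v₃ 0) (v₂ 0) = 0 := by simpa using ovv 2 1
  have ps2 : mink5 (nst 0) (v₂ 0) = 0 := by simpa using onstv 1
  have pn3 : mink5 (n 0) (v₃ 0) = 0 := by simpa using onv 2
  have p13 : mink5 (v₁ 0) (v₃ 0) = 0 := by simpa using ovv 0 2
  have p23 : mink5 (v₂ 0) (v₃ 0) = 0 := by simpa using ovv 1 2
  have p33 : mink5 (v₃ 0) (v₃ 0) = 1 := by simpa using ovv 2 2
  have ps3 : mink5 (nst 0) (v₃ 0) = 0 := by simpa using onstv 2
  obtain ⟨c1, c2, c3, c4, c5, c6⟩ :=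
    key_taylor n v₁ v₂ v₃ nst Q T hn hv₁ hv₂ hv₃ hnst hQ hT e1 e2 e3 e4 e5
      (v₂ 0) 1 0 pn2 p12 p22 p32 ps2 h hh
  obtain ⟨d1, d2, d3, d4, d5, d6⟩ :=
    key_taylor n v₁ v₂ v₃ nst Q T hn hv₁ hv₂ hv₃ hnst hQ hT e1 e2 e3 e4 e5
      (v₃ 0) 0 1 pn3 p13 p23 p33 ps3 g hg
  refine ⟨c1, c2, c3, c4, by simpa using c5, by rw [c6]; ring,
          d1, d2, d3, d4, by simpa using d5, by rw [d6]; ring⟩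
end
end

section
/- Let α, β ∈ ℝ⁵ satisfy ⟨α, α⟩ = ⟨β, β⟩ = 1 and ⟨α, β⟩ = 0, and let a, b ∈ ℝ⁵ satisfy ⟨α, a⟩ = 0, ⟨β, b⟩ = 0, and ⟨α, b⟩ + ⟨a, β⟩ = 0. Set p = α∧b + a∧β ∈ ⋀²ℝ⁵. If p is decomposable, i.e. p = u∧v for some u, v ∈ ℝ⁵, then there exist a nonzero vector s in the span of {α, β} and a vector w ∈ ℝ⁵ such that p = s∧w. (This is the pointwise core of the characterization of canal surfaces: if the derivative of the curve t ↦ α(t)∧β(t) of circles is a pure 2-vector, then its plane meets the plane span(α, β) in a line.) -/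
noncomputable section

/-- **pointwise core of the canal-surface characterization.** Let `α, β`
be orthonormal space-like vectors of `ℝ⁵₁` and let `a, b` satisfy `⟨α,a⟩ = 0`,
`⟨β,b⟩ = 0`, `⟨α,b⟩ + ⟨a,β⟩ = 0` (the derivative conditions for an orthonormal pair of
curves). If the 2-vector `p = α∧b + a∧β` is decomposable, then `p = s∧w` for some
nonzero `s ∈ span{α, β}` and some `w`: the plane of `p` meets the plane `span(α,β)`
in a line. -/
theorem pure_derivative_meets_plane
    (α β a b : Fin 5 → ℝ)
    (hαα : mink5 α α = 1) (hββ : mink5 β β = 1) (hαβ : mink5 α β = 0)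
    (hαa : mink5 α a = 0) (hβb : mink5 β b = 0)
    (hmix : mink5 α b + mink5 a β = 0)
    (p : Fin 5 → Fin 5 → ℝ)
    (hp : p = wedge α b + wedge a β)
    (hdec : ∃ u v : Fin 5 → ℝ, p = wedge u v) :
    ∃ (s w : Fin 5 → ℝ), s ≠ 0 ∧ s ∈ Submodule.span ℝ {α, β} ∧ p = wedge s w := by
  obtain ⟨u, v, huv⟩ := hdec
  have hT : ∀ k l m n : Fin 5, p k l * p m n - p k m * p l n + p k n * p l m = 0 := by
    intro k l m n; rw [huv]; simp only [wedge]; ring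
  simp only [mink5] at hαα hββ hαβ hαa hβb
  set q : ℝ := -(α 0 * b 0) + α 1 * b 1 + α 2 * b 2 + α 3 * b 3 + α 4 * b 4 with hq
  set r : ℝ := -(a 0 * β 0) + a 1 * β 1 + a 2 * β 2 + a 3 * β 3 + a 4 * β 4 with hr
  set a' : Fin 5 → ℝ := fun m => a m - r * β m with ha'
  set b' : Fin 5 → ℝ := fun m => b m - q * α m with hb'
  have hpc : ∀ m n : Fin 5, p m n = α m * b' n - α n * b' m + a' m * β n - a' n * β m := by
    intro m n; rw [hp]; simp only [ha', hb', wedge, Pi.add_apply]; ring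
  have o1 : -(α 0 * a' 0) + α 1 * a' 1 + α 2 * a' 2 + α 3 * a' 3 + α 4 * a' 4 = 0 := by
    simp only [ha']; linear_combination hαa - r * hαβ
  have o2 : -(β 0 * a' 0) + β 1 * a' 1 + β 2 * a' 2 + β 3 * a' 3 + β 4 * a' 4 = 0 := by
    simp only [ha']; linear_combination (-r) * hββ - hr
  have o3 : -(α 0 * b' 0) + α 1 * b' 1 + α 2 * b' 2 + α 3 * b' 3 + α 4 * b' 4 = 0 := by
    simp only [hb']; linear_combination (-q) * hαα - hq
  have o4 : -(β 0 * b' 0) + β 1 * b' 1 + β 2 * b' 2 + β 3 * b' 3 + β 4 * b' 4 = 0 := by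
    simp only [hb']; linear_combination hβb - q * hαβ
  have hA : ∀ m : Fin 5, -(α 0 * p 0 m) + α 1 * p 1 m + α 2 * p 2 m + α 3 * p 3 m + α 4 * p 4 m = b' m := by
    intro m
    linear_combination (-(α 0)) * hpc 0 m + α 1 * hpc 1 m + α 2 * hpc 2 m + α 3 * hpc 3 m + α 4 * hpc 4 m + b' m * hαα - α m * o3 + β m * o1 - a' m * hαβ
  have hB : ∀ m : Fin 5, -(β 0 * p 0 m) + β 1 * p 1 m + β 2 * p 2 m + β 3 * p 3 m + β 4 * p 4 m = -(a' m) := by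
    intro m
    linear_combination (-(β 0)) * hpc 0 m + β 1 * hpc 1 m + β 2 * hpc 2 m + β 3 * hpc 3 m + β 4 * hpc 4 m + b' m * hαβ - α m * o4 + β m * o2 - a' m * hββ
  have hC : -(β 0 * (-(α 0 * p 0 0) + α 1 * p 1 0 + α 2 * p 2 0 + α 3 * p 3 0 + α 4 * p 4 0)) + β 1 * (-(α 0 * p 0 1) + α 1 * p 1 1 + α 2 * p 2 1 + α 3 * p 3 1 + α 4 * p 4 1) + β 2 * (-(α 0 * p 0 2) + α 1 * p 1 2 + α 2 * p 2 2 + α 3 * p 3 2 + α 4 * p 4 2) + β 3 * (-(α 0 * p 0 3) + α 1 * p 1 3 + α 2 * p 2 3 + α 3 * p 3 3 + α 4 * p 4 3) + β 4 * (-(α 0 * p 0 4) + α 1 * p 1 4 + α 2 * p 2 4 + α 3 * p 3 4 + α 4 * p 4 4) = 0 := by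
    linear_combination (-(β 0)) * hA 0 + β 1 * hA 1 + β 2 * hA 2 + β 3 * hA 3 + β 4 * hA 4 + o4
  have key : ∀ i j : Fin 5, a' i * b' j - a' j * b' i = 0 := by
    intro i j
    linear_combination (-(-(β 0 * p 0 j) + β 1 * p 1 j + β 2 * p 2 j + β 3 * p 3 j + β 4 * p 4 j)) * hA i + (-(b' i)) * hB j + (-(β 0 * p 0 i) + β 1 * p 1 i + β 2 * p 2 i + β 3 * p 3 i + β 4 * p 4 i) * hA j + (b' j) * hB i + (p i j) * hC + (-(α 0 * β 0)) * hT 0 0 i j + ((α 0 * β 1)) * hT 0 1 i j + ((α 0 * β 2)) * hT 0 2 i j + ((α 0 * β 3)) * hT 0 3 i j + ((α 0 * β 4)) * hT 0 4 i j + ((α 1 * β 0)) * hT 1 0 i j + (-(α 1 * β 1)) * hT 1 1 i j + (-(α 1 * β 2)) * hT 1 2 i j + (-(α 1 * β 3)) * hT 1 3 i j + (-(α 1 * β 4)) * hT 1 4 i j + ((α 2 * β 0)) * hT 2 0 i j + (-(α 2 * β 1)) * hT 2 1 i j + (-(α 2 * β 2)) * hT 2 2 i j + (-(α 2 * β 3))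 * hT 2 3 i j + (-(α 2 * β 4)) * hT 2 4 i j + ((α 3 * β 0)) * hT 3 0 i j + (-(α 3 * β 1)) * hT 3 1 i j + (-(α 3 * β 2)) * hT 3 2 i j + (-(α 3 * β 3)) * hT 3 3 i j + (-(α 3 * β 4)) * hT 3 4 i j + ((α 4 * β 0)) * hT 4 0 i j + (-(α 4 * β 1)) * hT 4 1 i j + (-(α 4 * β 2)) * hT 4 2 i j + (-(α 4 * β 3)) * hT 4 3 i j + (-(α 4 * β 4)) * hT 4 4 i j
  by_cases hz : ∀ m, a' m = 0
  · refine ⟨α, b', ?_, ?_, ?_⟩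
    · intro h0
      rw [h0] at hαα; simp at hαα
    · exact Submodule.mem_span_pair.mpr ⟨1, 0, by simp⟩
    · funext m n
      rw [hpc m n]; simp only [wedge, hz m, hz n]; ring
  · push_neg at hz
    obtain ⟨k, hk⟩ := hz
    have hbc : ∀ m, b' m = b' k / a' k * a' m := by
      intro m
      rw [div_mul_eq_mul_div, eq_div_iff hk]
      linear_combination key k m
    refine ⟨fun m => b' k / a' k * α m - β m, a', ?_, ?_, ?_⟩
    · intro h0
      have e : ∀ m, b' k / a' k * α m - β m = 0 := fun m => by simpa using congrFun h0 m
      have hcontra : (-1 : ℝ) = 0 := by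
        linear_combination (-(b' k / a' k)) * hαβ + hββ + (-(β 0)) * e 0 + β 1 * e 1 + β 2 * e 2 + β 3 * e 3 + β 4 * e 4
      norm_num at hcontra
    · exact Submodule.mem_span_pair.mpr ⟨b' k / a' k, -1, by funext m; simp; ring⟩
    · funext m n
      rw [hpc m n, hbc m, hbc n]
      simp only [wedge]; ring
end
end

section
/- Let I ⊆ ℝ be an open interval and α, β : I → ℝ⁵ C^∞ curves with ⟨α, α⟩ = ⟨β, β⟩ = 1 and ⟨α, β⟩ = 0 on I; set γ(t) = α(t)∧β(t) ∈ ⋀²ℝ⁵ and assume γ'(t) ≠ 0 for all t ∈ I. Then the following are equivalent: (1) for every t ∈ I the 2-vector γ'(t) is decomposable (i.e. γ'(t) = u∧v for some u, v ∈ ℝ⁵, equivalently its Plücker coordinates satisfy the Plücker relations); (2) for every t₀ ∈ I there exist an open subinterval J ∋ t₀ and C^∞ maps σ : J → ℝ⁵ and μ : J → ℝ with ⟨σ(t), σ(t)⟩ = 1, σ(t) ∈ span{α(t), β(t)}, and σ(t)∧σ'(t) = μ(t)·γ(t) for all t ∈ J. (A curve of circles consists of characteristic circles of a canal surface if and only if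 its derivative always satisfies the Plücker relations.) -/
noncomputable section

lemma ctr_wedge_eq (w σ τ ρ κ : Fin 5 → ℝ) (μ : ℝ)
    (h : ∀ i j, σ i * τ j - σ j * τ i = μ * (ρ i * κ j - ρ j * κ i)) (j : Fin 5) :
    mink5 w σ * τ j - mink5 w τ * σ j = μ * (mink5 w ρ * κ j - mink5 w κ * ρ j) := by
  simp only [mink5]
  linear_combination (-(w 0)) * h 0 j + w 1 * h 1 j + w 2 * h 2 j + w 3 * h 3 j + w 4 * h 4 j

lemma ctr_wedge2_eq (w a b u v αv βv : Fin 5 → ℝ)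
    (h : ∀ i j, (a i * βv j - a j * βv i) + (αv i * b j - αv j * b i) = u i * v j - u j * v i)
    (j : Fin 5) :
    (mink5 w a * βv j - mink5 w βv * a j) + (mink5 w αv * b j - mink5 w b * αv j)
      = mink5 w u * v j - mink5 w v * u j := by
  simp only [mink5]
  linear_combination (-(w 0)) * h 0 j + w 1 * h 1 j + w 2 * h 2 j + w 3 * h 3 j + w 4 * h 4 j

lemma dep_lemma (x y : ℝ) (A B : Fin 5 → ℝ) (hxy : x^2 + y^2 = 1)
    (h : ∀ i, x * A i + y * B i = 0) (i j : Fin 5) :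
    A i * B j - A j * B i = 0 := by
  linear_combination (-(A i * B j - A j * B i)) * hxy + (x * B j - y * A j) * h i +
    (y * A i - x * B i) * h j

lemma ptwise_dep (αv βv a b u v : Fin 5 → ℝ)
    (hαα : mink5 αv αv = 1) (hββ : mink5 βv βv = 1) (hαβ : mink5 αv βv = 0)
    (haα : mink5 a αv = 0) (haβ : mink5 a βv = 0)
    (hbα : mink5 b αv = 0) (hbβ : mink5 b βv = 0)
    (hp : ∀ i j, (a i * βv j - a j * βv i) + (αv i * b j - αv j * b i) = u i * v j - u j * v i)
    (i j : Fin 5) : a i * b j - a j * b i = 0 := by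
  have hβα : mink5 βv αv = 0 := by rw [mink5_comm]; exact hαβ
  have hβa : mink5 βv a = 0 := by rw [mink5_comm]; exact haβ
  have hβb : mink5 βv b = 0 := by rw [mink5_comm]; exact hbβ
  have hαa : mink5 αv a = 0 := by rw [mink5_comm]; exact haα
  have hαb : mink5 αv b = 0 := by rw [mink5_comm]; exact hbα
  have ha : ∀ k, a k = mink5 βv v * u k - mink5 βv u * v k := by
    intro k
    have h1 := ctr_wedge2_eq βv a b u v αv βv hp k
    rw [hβa, hββ, hβα, hβb] at h1
    linarith [h1]
  have hb : ∀ k, b k = mink5 αv u * v k - mink5 αv v * u k := by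
    intro k
    have h1 := ctr_wedge2_eq αv a b u v αv βv hp k
    rw [hαa, hαβ, hαα, hαb] at h1
    linarith [h1]
  set c : ℝ := mink5 βv v * mink5 αv u - mink5 βv u * mink5 αv v with hc
  have hab : ∀ k l, a k * b l - a l * b k = c * (u k * v l - u l * v k) := by
    intro k l; rw [ha k, ha l, hb k, hb l, hc]; ring
  have hca : ∀ k, c * a k = 0 := by
    intro k
    have h2 := ctr_wedge_eq βv a b u v c (fun k l => hab k l) k
    rw [hβa, hβb] at h2
    have h3 : mink5 βv u * v k - mink5 βv v * u k = -(a k) := by rw [ha k]; ring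
    rw [h3] at h2
    linear_combination h2
  by_cases hc0 : c = 0
  · rw [hab i j, hc0]; ring
  · have hai : a i = 0 := by have := mul_eq_zero.mp (hca i); tauto
    have haj : a j = 0 := by have := mul_eq_zero.mp (hca j); tauto
    rw [hai, haj]; ring

lemma ptwise_C (αv βv A B : Fin 5 → ℝ) (x y P Q μ : ℝ)
    (hαα : mink5 αv αv = 1) (hββ : mink5 βv βv = 1) (hαβ : mink5 αv βv = 0)
    (hAα : mink5 A αv = 0) (hAβ : mink5 A βv = 0)
    (hBα : mink5 B αv = 0) (hBβ : mink5 B βv = 0)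
    (hxy : x^2 + y^2 = 1)
    (hW : ∀ i j, (x * αv i + y * βv i) * (P * αv j + Q * βv j + (x * A j + y * B j))
        - (x * αv j + y * βv j) * (P * αv i + Q * βv i + (x * A i + y * B i))
        = μ * (αv i * βv j - αv j * βv i)) :
    ∀ i, x * A i + y * B i = 0 := by
  simp only [mink5] at hαα hββ hαβ hAα hAβ hBα hBβ
  have hασ : mink5 αv (fun i => x * αv i + y * βv i) = x := by
    simp only [mink5]; linear_combination x * hαα + y * hαβ
  have hβσ : mink5 βv (fun i => x * αv i + y * βv i) = y := by
    simp only [mink5]; linear_combination x * hαβ + y * hββ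
  have hατ : mink5 αv (fun i => P * αv i + Q * βv i + (x * A i + y * B i)) = P := by
    simp only [mink5]; linear_combination P * hαα + Q * hαβ + x * hAα + y * hBα
  have hβτ : mink5 βv (fun i => P * αv i + Q * βv i + (x * A i + y * B i)) = Q := by
    simp only [mink5]; linear_combination P * hαβ + Q * hββ + x * hAβ + y * hBβ
  have hαα' : mink5 αv αv = 1 := by simp only [mink5]; linear_combination hαα
  have hββ' : mink5 βv βv = 1 := by simp only [mink5]; linear_combination hββ
  have hαβ' : mink5 αv βv = 0 := by simp only [mink5]; linear_combination hαβ
  have e1 : ∀ j, x * (x * A j + y * B j) = (μ - x * Q + P * y) * βv j := by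
    intro j
    have h1 := ctr_wedge_eq αv (fun i => x * αv i + y * βv i)
      (fun i => P * αv i + Q * βv i + (x * A i + y * B i)) αv βv μ hW j
    rw [hασ, hατ, hαα', hαβ'] at h1
    linear_combination h1
  have e2 : ∀ j, y * (x * A j + y * B j) = (x * Q - y * P - μ) * αv j := by
    intro j
    have h1 := ctr_wedge_eq βv (fun i => x * αv i + y * βv i)
      (fun i => P * αv i + Q * βv i + (x * A i + y * B i)) αv βv μ hW j
    have hβα' : mink5 βv αv = 0 := by simp only [mink5]; linear_combination hαβ
    rw [hβσ, hβτ, hβα', hββ'] at h1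
    linear_combination h1
  have hμ : μ - x * Q + P * y = 0 := by
    linear_combination (βv 0) * e1 0 - βv 1 * e1 1 - βv 2 * e1 2 - βv 3 * e1 3 -
      βv 4 * e1 4 + x * x * hAβ + x * y * hBβ - (μ - x * Q + P * y) * hββ
  intro i
  have hx0 : x * (x * A i + y * B i) = 0 := by rw [e1 i, hμ]; ring
  have hy0 : y * (x * A i + y * B i) = 0 := by
    rw [e2 i]
    have h : x * Q - y * P - μ = 0 := by linarith [hμ]
    rw [h]; ring
  linear_combination x * hx0 + y * hy0 - (x * A i + y * B i) * hxy

lemma decomp_of_minors (αv βv A B : Fin 5 → ℝ) (G : Fin 5 → Fin 5 → ℝ)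
    (hG : G = wedge A βv + wedge αv B)
    (hAB : ∀ i j, A i * B j - A j * B i = 0) :
    ∃ u v, G = wedge u v := by
  by_cases hA : ∀ i, A i = 0
  · refine ⟨αv, B, ?_⟩
    funext i j
    simp only [hG, Pi.add_apply, wedge, hA i, hA j]; ring
  · push_neg at hA
    obtain ⟨m, hm⟩ := hA
    refine ⟨A, fun i => βv i - B m / A m * αv i, ?_⟩
    funext i j
    simp only [hG, Pi.add_apply, wedge]
    field_simp
    linear_combination αv i * hAB m j - αv j * hAB m i

lemma span_decomp (αv βv s : Fin 5 → ℝ)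
    (hαα : mink5 αv αv = 1) (hββ : mink5 βv βv = 1) (hαβ : mink5 αv βv = 0)
    (hs : s ∈ Submodule.span ℝ {αv, βv}) :
    ∀ i, s i = mink5 s αv * αv i + mink5 s βv * βv i := by
  obtain ⟨c, d, hcd⟩ := Submodule.mem_span_pair.mp hs
  simp only [mink5] at hαα hββ hαβ
  have hsc : mink5 s αv = c := by
    rw [← hcd]; simp only [mink5, Pi.add_apply, Pi.smul_apply, smul_eq_mul]
    linear_combination c * hαα + d * hαβ
  have hsd : mink5 s βv = d := by
    rw [← hcd]; simp only [mink5, Pi.add_apply, Pi.smul_apply, smul_eq_mul]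
    linear_combination c * hαβ + d * hββ
  intro i
  rw [hsc, hsd, ← hcd]
  simp only [Pi.add_apply, Pi.smul_apply, smul_eq_mul]

lemma span_norm (αv βv s : Fin 5 → ℝ)
    (hαα : mink5 αv αv = 1) (hββ : mink5 βv βv = 1) (hαβ : mink5 αv βv = 0)
    (hs : s ∈ Submodule.span ℝ {αv, βv}) (hss : mink5 s s = 1) :
    mink5 s αv ^ 2 + mink5 s βv ^ 2 = 1 := by
  have h := span_decomp αv βv s hαα hββ hαβ hs
  set c := mink5 s αv; set d := mink5 s βv
  simp only [mink5] at hαα hββ hαβ hss ⊢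
  rw [h 0, h 1, h 2, h 3, h 4] at hss
  linear_combination hss - c^2 * hαα - 2*c*d*hαβ - d^2*hββ

/-! ### Auxiliary calculus lemmas -/

lemma hasDerivAt_of_contDiffOn {I : Set ℝ} {F : Type*} [NormedAddCommGroup F]
    [NormedSpace ℝ F] {f : ℝ → F}
    (hI : IsOpen I) (hf : ContDiffOn ℝ (⊤ : ℕ∞) f I) {t : ℝ} (ht : t ∈ I) :
    HasDerivAt f (deriv f t) t :=
  ((hf.contDiffAt (hI.mem_nhds ht)).differentiableAt (by simp)).hasDerivAt

lemma mink5_hasDerivAt_s15 {x y : ℝ → Fin 5 → ℝ} {x' y' : Fin 5 → ℝ} {t : ℝ}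
    (hx : HasDerivAt x x' t) (hy : HasDerivAt y y' t) :
    HasDerivAt (fun s => mink5 (x s) (y s)) (mink5 x' (y t) + mink5 (x t) y') t := by
  have hxi := hasDerivAt_pi.1 hx
  have hyi := hasDerivAt_pi.1 hy
  have H := (((((hxi 0).mul (hyi 0)).neg.add ((hxi 1).mul (hyi 1))).add
    ((hxi 2).mul (hyi 2))).add ((hxi 3).mul (hyi 3))).add ((hxi 4).mul (hyi 4))
  convert H using 1 <;> first | rfl | (funext s; simp only [mink5, Pi.add_apply, Pi.mul_apply, Pi.neg_apply]) | skip
  simp only [mink5]; ring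

lemma deriv_pair_zero {I : Set ℝ} (hI : IsOpen I) {x y : ℝ → Fin 5 → ℝ}
    {x' y' : Fin 5 → ℝ} {t : ℝ} {c : ℝ}
    (hconst : ∀ s ∈ I, mink5 (x s) (y s) = c)
    (hx : HasDerivAt x x' t) (hy : HasDerivAt y y' t) (ht : t ∈ I) :
    mink5 x' (y t) + mink5 (x t) y' = 0 := by
  have h1 := mink5_hasDerivAt_s15 hx hy
  have h2 : (fun s => mink5 (x s) (y s)) =ᶠ[nhds t] fun _ => c := by
    filter_upwards [hI.mem_nhds ht] with s hs using hconst s hs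
  have h3 : HasDerivAt (fun _ : ℝ => c) (mink5 x' (y t) + mink5 (x t) y') t :=
    h1.congr_of_eventuallyEq h2.symm
  exact h3.unique (hasDerivAt_const t c)

lemma contDiffOn_apply' {I : Set ℝ} {f : ℝ → Fin 5 → ℝ}
    (hf : ContDiffOn ℝ (⊤ : ℕ∞) f I) (i : Fin 5) :
    ContDiffOn ℝ (⊤ : ℕ∞) (fun t => f t i) I :=
  (ContinuousLinearMap.proj (R := ℝ) (φ := fun _ : Fin 5 => ℝ) i).contDiff.comp_contDiffOn hf

lemma contDiffOn_mink5 {I : Set ℝ} {x y : ℝ → Fin 5 → ℝ}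
    (hx : ContDiffOn ℝ (⊤ : ℕ∞) x I) (hy : ContDiffOn ℝ (⊤ : ℕ∞) y I) :
    ContDiffOn ℝ (⊤ : ℕ∞) (fun t => mink5 (x t) (y t)) I := by
  simp only [mink5]
  exact ((((((contDiffOn_apply' hx 0).mul (contDiffOn_apply' hy 0)).neg).add
    ((contDiffOn_apply' hx 1).mul (contDiffOn_apply' hy 1))).add
    ((contDiffOn_apply' hx 2).mul (contDiffOn_apply' hy 2))).add
    ((contDiffOn_apply' hx 3).mul (contDiffOn_apply' hy 3))).add
    ((contDiffOn_apply' hx 4).mul (contDiffOn_apply' hy 4))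

/-! ### The main theorem -/

/-- **characterization of canal surfaces.** Let `α, β` be smooth curves on
an open interval `I` forming an orthonormal space-like pair in `ℝ⁵₁`, and let
`γ = α ∧ β` be the corresponding curve of oriented circles in `S³`, with `γ' ≠ 0` on `I`.
Then `γ'` is decomposable (i.e. satisfies the Plücker relations) at every `t ∈ I` if and
only if near every `t₀ ∈ I` there are a smooth unit curve `σ` in de Sitter space with
`σ(t) ∈ span{α(t), β(t)}` and a smooth scalar `μ` with `σ ∧ σ' = μ·γ`; i.e. `γ` consists
of the characteristic circles of a canal surface. -/
theorem canal_surface_characterization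
    (I : Set ℝ) (hIopen : IsOpen I) (hIint : I.OrdConnected)
    (α β : ℝ → Fin 5 → ℝ)
    (hα : ContDiffOn ℝ (⊤ : ℕ∞) α I) (hβ : ContDiffOn ℝ (⊤ : ℕ∞) β I)
    (hαα : ∀ t ∈ I, mink5 (α t) (α t) = 1)
    (hββ : ∀ t ∈ I, mink5 (β t) (β t) = 1)
    (hαβ : ∀ t ∈ I, mink5 (α t) (β t) = 0)
    (γ : ℝ → Fin 5 → Fin 5 → ℝ)
    (hγ : ∀ t, γ t = wedge (α t) (β t))
    (hγ' : ∀ t ∈ I, deriv γ t ≠ 0) :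
    (∀ t ∈ I, ∃ u v : Fin 5 → ℝ, deriv γ t = wedge u v) ↔
    (∀ t₀ ∈ I, ∃ (J : Set ℝ) (σ : ℝ → Fin 5 → ℝ) (μ : ℝ → ℝ),
      IsOpen J ∧ J.OrdConnected ∧ t₀ ∈ J ∧ J ⊆ I ∧
      ContDiffOn ℝ (⊤ : ℕ∞) σ J ∧ ContDiffOn ℝ (⊤ : ℕ∞) μ J ∧
      ∀ t ∈ J, mink5 (σ t) (σ t) = 1 ∧
        σ t ∈ Submodule.span ℝ {α t, β t} ∧
        wedge (σ t) (deriv σ t) = μ t • γ t) := by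
  classical
  have hdα : ∀ t ∈ I, HasDerivAt α (deriv α t) t :=
    fun t ht => hasDerivAt_of_contDiffOn hIopen hα ht
  have hdβ : ∀ t ∈ I, HasDerivAt β (deriv β t) t :=
    fun t ht => hasDerivAt_of_contDiffOn hIopen hβ ht
  set f : ℝ → ℝ := fun t => mink5 (deriv α t) (β t) with hf_def
  set A : ℝ → Fin 5 → ℝ := fun t i => deriv α t i - f t * β t i with hA_def
  set B : ℝ → Fin 5 → ℝ := fun t i => deriv β t i + f t * α t i with hB_def
  have e1 : ∀ t ∈ I, mink5 (deriv α t) (α t) = 0 := by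
    intro t ht
    have h := deriv_pair_zero hIopen hαα (hdα t ht) (hdα t ht) ht
    have hc : mink5 (α t) (deriv α t) = mink5 (deriv α t) (α t) := mink5_comm _ _
    linarith [h]
  have e2 : ∀ t ∈ I, mink5 (deriv β t) (β t) = 0 := by
    intro t ht
    have h := deriv_pair_zero hIopen hββ (hdβ t ht) (hdβ t ht) ht
    have hc : mink5 (β t) (deriv β t) = mink5 (deriv β t) (β t) := mink5_comm _ _
    linarith [h]
  have e3 : ∀ t ∈ I, mink5 (deriv α t) (β t) + mink5 (α t) (deriv β t) = 0 :=
    fun t ht => deriv_pair_zero hIopen hαβ (hdα t ht) (hdβ t ht) ht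
  have hAα : ∀ t ∈ I, mink5 (A t) (α t) = 0 := by
    intro t ht
    have hexp : mink5 (A t) (α t)
        = mink5 (deriv α t) (α t) - f t * mink5 (β t) (α t) := by
      simp only [hA_def, mink5]; ring
    rw [hexp, e1 t ht, mink5_comm (β t) (α t), hαβ t ht]; ring
  have hAβ : ∀ t ∈ I, mink5 (A t) (β t) = 0 := by
    intro t ht
    have hexp : mink5 (A t) (β t)
        = mink5 (deriv α t) (β t) - f t * mink5 (β t) (β t) := by
      simp only [hA_def, mink5]; ring
    rw [hexp, hββ t ht, hf_def]; ring
  have hBα : ∀ t ∈ I, mink5 (B t) (α t) = 0 := by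
    intro t ht
    have hexp : mink5 (B t) (α t)
        = mink5 (deriv β t) (α t) + f t * mink5 (α t) (α t) := by
      simp only [hB_def, mink5]; ring
    rw [hexp, mink5_comm (deriv β t) (α t), hαα t ht]
    have := e3 t ht
    simp only [hf_def]
    linarith [this]
  have hBβ : ∀ t ∈ I, mink5 (B t) (β t) = 0 := by
    intro t ht
    have hexp : mink5 (B t) (β t)
        = mink5 (deriv β t) (β t) + f t * mink5 (α t) (β t) := by
      simp only [hB_def, mink5]; ring
    rw [hexp, e2 t ht, hαβ t ht]; ring
  have hdγ : ∀ t ∈ I, HasDerivAt γ (fun i j => deriv α t i * β t j + α t i * deriv β t j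
      - (deriv α t j * β t i + α t j * deriv β t i)) t := by
    intro t ht
    apply hasDerivAt_pi.2; intro i; apply hasDerivAt_pi.2; intro j
    have hfun : (fun s => γ s i j) = fun s => α s i * β s j - α s j * β s i := by
      funext s; rw [hγ s]; rfl
    rw [hfun]
    exact ((hasDerivAt_pi.1 (hdα t ht) i).mul (hasDerivAt_pi.1 (hdβ t ht) j)).sub
      ((hasDerivAt_pi.1 (hdα t ht) j).mul (hasDerivAt_pi.1 (hdβ t ht) i))
  have hγ'enc : ∀ t ∈ I, ∀ i j, deriv γ t i j
      = (A t i * β t j - A t j * β t i) + (α t i * B t j - α t j * B t i) := by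
    intro t ht i j
    rw [(hdγ t ht).deriv]
    simp only [hA_def, hB_def]; ring
  have hα' : ContDiffOn ℝ (⊤ : ℕ∞) (deriv α) I := hα.deriv_of_isOpen hIopen (by simp)
  have hβ' : ContDiffOn ℝ (⊤ : ℕ∞) (deriv β) I := hβ.deriv_of_isOpen hIopen (by simp)
  have hfc : ContDiffOn ℝ (⊤ : ℕ∞) f I := contDiffOn_mink5 hα' hβ
  have hAc : ContDiffOn ℝ (⊤ : ℕ∞) A I := by
    apply contDiffOn_pi.2; intro i
    exact (contDiffOn_apply' hα' i).sub (hfc.mul (contDiffOn_apply' hβ i))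
  have hBc : ContDiffOn ℝ (⊤ : ℕ∞) B I := by
    apply contDiffOn_pi.2; intro i
    exact (contDiffOn_apply' hβ' i).add (hfc.mul (contDiffOn_apply' hα i))
  constructor
  · -- (1) ⟹ (2)
    intro h t₀ ht₀
    have hAB : ∀ t ∈ I, ∀ i j, A t i * B t j - A t j * B t i = 0 := by
      intro t ht i j
      obtain ⟨u, v, huv⟩ := h t ht
      refine ptwise_dep (α t) (β t) (A t) (B t) u v (hαα t ht) (hββ t ht) (hαβ t ht)
        (hAα t ht) (hAβ t ht) (hBα t ht) (hBβ t ht) ?_ i j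
      intro k l
      rw [← hγ'enc t ht k l, huv]
      rfl
    have hnz : (∃ m, A t₀ m ≠ 0) ∨ (∃ m, B t₀ m ≠ 0) := by
      by_contra hcon
      push_neg at hcon
      obtain ⟨hA0, hB0⟩ := hcon
      apply hγ' t₀ ht₀
      funext i j
      have hh := hγ'enc t₀ ht₀ i j
      rw [hh, hA0 i, hA0 j, hB0 i, hB0 j]
      show _ = (0 : ℝ)
      ring
    obtain ⟨J, hJo, hJord, htJ, hJI, a, b, hac, hbc, hab⟩ :
        ∃ J, IsOpen J ∧ J.OrdConnected ∧ t₀ ∈ J ∧ J ⊆ I ∧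
          ∃ a b : ℝ → ℝ, ContDiffOn ℝ (⊤ : ℕ∞) a J ∧ ContDiffOn ℝ (⊤ : ℕ∞) b J ∧
            ∀ t ∈ J, a t ^ 2 + b t ^ 2 = 1 ∧ ∀ i, a t * A t i + b t * B t i = 0 := by
      rcases hnz with ⟨m, hm⟩ | ⟨m, hm⟩
      · -- A t₀ m ≠ 0
        have hScont : ContinuousOn (fun t => A t m) I := (contDiffOn_apply' hAc m).continuousOn
        have hSopen : IsOpen (I ∩ (fun t => A t m) ⁻¹' {(0:ℝ)}ᶜ) :=
          hScont.isOpen_inter_preimage hIopen isOpen_compl_singleton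
        obtain ⟨ε, hε, hball⟩ := Metric.isOpen_iff.1 hSopen t₀ ⟨ht₀, by simpa using hm⟩
        have hJI : Metric.ball t₀ ε ⊆ I := fun s hs => (hball hs).1
        have hAm : ∀ t ∈ Metric.ball t₀ ε, A t m ≠ 0 := by
          intro s hs
          have := (hball hs).2
          simpa using this
        set g : ℝ → ℝ := fun t => B t m / A t m with hg_def
        have hgc : ContDiffOn ℝ (⊤ : ℕ∞) g (Metric.ball t₀ ε) :=
          ContDiffOn.div ((contDiffOn_apply' hBc m).mono hJI)
            ((contDiffOn_apply' hAc m).mono hJI) hAm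
        have hsq : ContDiffOn ℝ (⊤ : ℕ∞) (fun t => Real.sqrt (1 + g t ^ 2)) (Metric.ball t₀ ε) := by
          intro s hs
          have hpos : (1:ℝ) + g s ^ 2 ≠ 0 := by positivity
          exact (Real.contDiffAt_sqrt hpos).comp_contDiffWithinAt s
            ((contDiffOn_const.add (hgc.pow 2)) s hs)
        have hrpos : ∀ s ∈ Metric.ball t₀ ε, Real.sqrt (1 + g s ^ 2) ≠ 0 := by
          intro s _
          have : (0:ℝ) < 1 + g s ^ 2 := by positivity
          exact ne_of_gt (Real.sqrt_pos.2 this)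
        have hrc : ContDiffOn ℝ (⊤ : ℕ∞) (fun t => (Real.sqrt (1 + g t ^ 2))⁻¹) (Metric.ball t₀ ε) :=
          hsq.inv hrpos
        refine ⟨Metric.ball t₀ ε, Metric.isOpen_ball,
          by rw [Real.ball_eq_Ioo]; exact Set.ordConnected_Ioo, Metric.mem_ball_self hε, hJI,
          fun t => -(g t * (Real.sqrt (1 + g t ^ 2))⁻¹),
          fun t => (Real.sqrt (1 + g t ^ 2))⁻¹, (hgc.mul hrc).neg, hrc, ?_⟩
        intro t ht
        have hpos : (0:ℝ) < 1 + g t ^ 2 := by positivity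
        have hsqne := hrpos t ht
        have h1 : Real.sqrt (1 + g t ^ 2) ^ 2 = 1 + g t ^ 2 := Real.sq_sqrt hpos.le
        constructor
        · field_simp <;> linarith [h1]
        · intro i
          have hBi : B t i = g t * A t i := by
            have hm' := hAm t ht
            have hmin := hAB t (hJI ht) m i
            rw [hg_def]
            field_simp
            linarith [hmin]
          rw [hBi]; ring
      · -- B t₀ m ≠ 0
        have hScont : ContinuousOn (fun t => B t m) I := (contDiffOn_apply' hBc m).continuousOn
        have hSopen : IsOpen (I ∩ (fun t => B t m) ⁻¹' {(0:ℝ)}ᶜ) :=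
          hScont.isOpen_inter_preimage hIopen isOpen_compl_singleton
        obtain ⟨ε, hε, hball⟩ := Metric.isOpen_iff.1 hSopen t₀ ⟨ht₀, by simpa using hm⟩
        have hJI : Metric.ball t₀ ε ⊆ I := fun s hs => (hball hs).1
        have hBm : ∀ t ∈ Metric.ball t₀ ε, B t m ≠ 0 := by
          intro s hs
          have := (hball hs).2
          simpa using this
        set g : ℝ → ℝ := fun t => A t m / B t m with hg_def
        have hgc : ContDiffOn ℝ (⊤ : ℕ∞) g (Metric.ball t₀ ε) :=
          ContDiffOn.div ((contDiffOn_apply' hAc m).mono hJI)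
            ((contDiffOn_apply' hBc m).mono hJI) hBm
        have hsq : ContDiffOn ℝ (⊤ : ℕ∞) (fun t => Real.sqrt (1 + g t ^ 2)) (Metric.ball t₀ ε) := by
          intro s hs
          have hpos : (1:ℝ) + g s ^ 2 ≠ 0 := by positivity
          exact (Real.contDiffAt_sqrt hpos).comp_contDiffWithinAt s
            ((contDiffOn_const.add (hgc.pow 2)) s hs)
        have hrpos : ∀ s ∈ Metric.ball t₀ ε, Real.sqrt (1 + g s ^ 2) ≠ 0 := by
          intro s _
          have : (0:ℝ) < 1 + g s ^ 2 := by positivity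
          exact ne_of_gt (Real.sqrt_pos.2 this)
        have hrc : ContDiffOn ℝ (⊤ : ℕ∞) (fun t => (Real.sqrt (1 + g t ^ 2))⁻¹) (Metric.ball t₀ ε) :=
          hsq.inv hrpos
        refine ⟨Metric.ball t₀ ε, Metric.isOpen_ball,
          by rw [Real.ball_eq_Ioo]; exact Set.ordConnected_Ioo, Metric.mem_ball_self hε, hJI,
          fun t => (Real.sqrt (1 + g t ^ 2))⁻¹,
          fun t => -(g t * (Real.sqrt (1 + g t ^ 2))⁻¹), hrc, (hgc.mul hrc).neg, ?_⟩
        intro t ht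
        have hpos : (0:ℝ) < 1 + g t ^ 2 := by positivity
        have hsqne := hrpos t ht
        have h1 : Real.sqrt (1 + g t ^ 2) ^ 2 = 1 + g t ^ 2 := Real.sq_sqrt hpos.le
        constructor
        · field_simp <;> linarith [h1]
        · intro i
          have hAi : A t i = g t * B t i := by
            have hm' := hBm t ht
            have hmin := hAB t (hJI ht) i m
            rw [hg_def]
            field_simp
            linarith [hmin]
          rw [hAi]; ring
    -- construct σ and μ from a, b
    set σ : ℝ → Fin 5 → ℝ := fun t i => a t * α t i + b t * β t i with hσ_def
    have hσc : ContDiffOn ℝ (⊤ : ℕ∞) σ J := by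
      apply contDiffOn_pi.2; intro i
      exact (hac.mul ((contDiffOn_apply' hα i).mono hJI)).add
        (hbc.mul ((contDiffOn_apply' hβ i).mono hJI))
    set μ : ℝ → ℝ := fun t => f t + a t * deriv b t - b t * deriv a t with hμ_def
    have hμc : ContDiffOn ℝ (⊤ : ℕ∞) μ J :=
      ((hfc.mono hJI).add (hac.mul (hbc.deriv_of_isOpen hJo (by simp)))).sub
        (hbc.mul (hac.deriv_of_isOpen hJo (by simp)))
    refine ⟨J, σ, μ, hJo, hJord, htJ, hJI, hσc, hμc, ?_⟩
    intro t ht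
    have htI := hJI ht
    have hdσ : HasDerivAt σ (fun i => deriv a t * α t i + a t * deriv α t i
        + (deriv b t * β t i + b t * deriv β t i)) t := by
      apply hasDerivAt_pi.2; intro i
      exact ((hasDerivAt_of_contDiffOn hJo hac ht).mul (hasDerivAt_pi.1 (hdα t htI) i)).add
        ((hasDerivAt_of_contDiffOn hJo hbc ht).mul (hasDerivAt_pi.1 (hdβ t htI) i))
    have hdσ' : ∀ i, deriv σ t i = deriv a t * α t i + a t * deriv α t i
        + (deriv b t * β t i + b t * deriv β t i) := fun i => by rw [hdσ.deriv]
    refine ⟨?_, ?_, ?_⟩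
    · have h1 := hαα t htI; have h2 := hββ t htI; have h3 := hαβ t htI
      have h4 := (hab t ht).1
      simp only [mink5] at h1 h2 h3 ⊢
      simp only [hσ_def]
      linear_combination (a t)^2 * h1 + (b t)^2 * h2 + 2 * (a t) * (b t) * h3 + h4
    · apply Submodule.mem_span_pair.2
      exact ⟨a t, b t, by
        funext i
        simp only [Pi.add_apply, Pi.smul_apply, smul_eq_mul, hσ_def]⟩
    · funext i j
      have hCi := (hab t ht).2 i
      have hCj := (hab t ht).2 j
      simp only [hA_def, hB_def] at hCi hCj
      have h4 := (hab t ht).1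
      rw [hγ t]
      simp only [wedge, Pi.smul_apply, smul_eq_mul, hσ_def, hμ_def]
      rw [hdσ' i, hdσ' j]
      linear_combination (a t * α t i + b t * β t i) * hCj
        - (a t * α t j + b t * β t j) * hCi
        + (f t * (α t i * β t j - α t j * β t i)) * h4
  · -- (2) ⟹ (1)
    intro h t ht
    obtain ⟨J, σ, μ, hJo, hJord, htJ, hJI, hσc, hμc, hprops⟩ := h t ht
    have htI : t ∈ I := hJI htJ
    set a : ℝ → ℝ := fun s => mink5 (σ s) (α s) with ha_def
    set b : ℝ → ℝ := fun s => mink5 (σ s) (β s) with hb_def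
    have hdecomp : ∀ s ∈ J, ∀ i, σ s i = a s * α s i + b s * β s i := by
      intro s hs i
      exact span_decomp (α s) (β s) (σ s) (hαα s (hJI hs)) (hββ s (hJI hs))
        (hαβ s (hJI hs)) (hprops s hs).2.1 i
    have hac : ContDiffOn ℝ (⊤ : ℕ∞) a J := contDiffOn_mink5 hσc (hα.mono hJI)
    have hbc : ContDiffOn ℝ (⊤ : ℕ∞) b J := contDiffOn_mink5 hσc (hβ.mono hJI)
    have hdσ : HasDerivAt σ (fun i => deriv a t * α t i + a t * deriv α t i
        + (deriv b t * β t i + b t * deriv β t i)) t := by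
      have h1 : HasDerivAt (fun s i => a s * α s i + b s * β s i)
          (fun i => deriv a t * α t i + a t * deriv α t i
            + (deriv b t * β t i + b t * deriv β t i)) t := by
        apply hasDerivAt_pi.2; intro i
        exact ((hasDerivAt_of_contDiffOn hJo hac htJ).mul (hasDerivAt_pi.1 (hdα t htI) i)).add
          ((hasDerivAt_of_contDiffOn hJo hbc htJ).mul (hasDerivAt_pi.1 (hdβ t htI) i))
      apply h1.congr_of_eventuallyEq
      filter_upwards [hJo.mem_nhds htJ] with s hs
      funext i
      exact hdecomp s hs i
    have hxy : a t ^ 2 + b t ^ 2 = 1 :=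
      span_norm (α t) (β t) (σ t) (hαα t htI) (hββ t htI) (hαβ t htI)
        (hprops t htJ).2.1 (hprops t htJ).1
    have hW := (hprops t htJ).2.2
    have hW' : ∀ i j, (a t * α t i + b t * β t i)
        * ((deriv a t - b t * f t) * α t j + (deriv b t + a t * f t) * β t j
          + (a t * A t j + b t * B t j))
        - (a t * α t j + b t * β t j)
        * ((deriv a t - b t * f t) * α t i + (deriv b t + a t * f t) * β t i
          + (a t * A t i + b t * B t i))
        = μ t * (α t i * β t j - α t j * β t i) := by
      intro i j
      have h1 := congrFun (congrFun hW i) j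
      rw [hγ t] at h1
      simp only [wedge, Pi.smul_apply, smul_eq_mul] at h1
      rw [hdecomp t htJ i, hdecomp t htJ j, hdσ.deriv] at h1
      have hexp : ∀ k, deriv a t * α t k + a t * deriv α t k
          + (deriv b t * β t k + b t * deriv β t k)
          = (deriv a t - b t * f t) * α t k + (deriv b t + a t * f t) * β t k
            + (a t * A t k + b t * B t k) := by
        intro k
        simp only [hA_def, hB_def]; ring
      rw [← hexp i, ← hexp j]
      exact h1
    have hCzero := ptwise_C (α t) (β t) (A t) (B t) (a t) (b t)
      (deriv a t - b t * f t) (deriv b t + a t * f t) (μ t)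
      (hαα t htI) (hββ t htI) (hαβ t htI)
      (hAα t htI) (hAβ t htI) (hBα t htI) (hBβ t htI) hxy hW'
    have hminor := dep_lemma (a t) (b t) (A t) (B t) hxy hCzero
    exact decomp_of_minors (α t) (β t) (A t) (B t) (deriv γ t)
      (by
        funext i j
        rw [hγ'enc t ht i j]
        simp only [Pi.add_apply, wedge])
      hminor
end
end

section
/- Let x : ℝ → ℝ³ be a C^∞ unit-speed curve (‖x'(s)‖ = 1 for all s) with κ(s) := ‖x''(s)‖ > 0 everywhere, and define the torsion τ(s) := det(x'(s), x''(s), x'''(s))/κ(s)². Let m : ℝ → ℝ⁵ be the light-cone lift m(s) = (1/√2 + (x·x)/(2√2), −1/√2 + (x·x)/(2√2), x(s)). Then for all s: ⟨m, m⟩ = 0, ⟨m', m'⟩ = 1, ⟨m'', m''⟩ = κ², ⟨m''', m'''⟩ = κ⁴ + (κ')² + κ²τ², and ⟨m⁽⁴⁾, m⁽⁴⁾⟩ = 9κ²(κ')² + (κ³ + κτ² − κ'')² + (2κ'τ + κτ')². -/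
noncomputable section

/- ### Auxiliary machinery -/

private lemma aux_lt_top (n : ℕ) : (n : WithTop ℕ∞) < ((⊤ : ℕ∞) : WithTop ℕ∞) := by
  exact_mod_cast ENat.coe_lt_top n

/-- Iterated derivatives commute with continuous linear maps. -/
private lemma clm_iter {F : Type*} [NormedAddCommGroup F] [NormedSpace ℝ F]
    (f : ℝ → F) (hf : ContDiff ℝ (⊤ : ℕ∞) f) (L : F →L[ℝ] ℝ) (n : ℕ) :
    ∀ s, iteratedDeriv n (fun t => L (f t)) s = L (iteratedDeriv n f s) := by
  induction n with
  | zero => intro s; simp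
  | succ n ih =>
    intro s
    rw [iteratedDeriv_succ, iteratedDeriv_succ]
    have hdiff : DifferentiableAt ℝ (iteratedDeriv n f) s :=
      (hf.differentiable_iteratedDeriv n (aux_lt_top n)) s
    have h1 : HasDerivAt (fun t => L (iteratedDeriv n f t))
        (L (deriv (iteratedDeriv n f) s)) s :=
      L.hasFDerivAt.comp_hasDerivAt s hdiff.hasDerivAt
    have h2 : (fun t => L (iteratedDeriv n f t)) = iteratedDeriv n (fun t => L (f t)) :=
      funext fun t => (ih t).symm
    rw [← h2]
    exact h1.deriv

private lemma normsq3 (v : EuclideanSpace ℝ (Fin 3)) :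
    ‖v‖ ^ 2 = v 0 ^ 2 + v 1 ^ 2 + v 2 ^ 2 := by
  rw [EuclideanSpace.norm_eq, Real.sq_sqrt (by positivity)]
  simp [Fin.sum_univ_three, Real.norm_eq_abs, sq_abs]

/-- the `n`-th derivative of the `i`-th component of the curve. -/
private def cD (x : ℝ → EuclideanSpace ℝ (Fin 3)) (n : ℕ) (i : Fin 3) : ℝ → ℝ :=
  iteratedDeriv n (fun s => x s i)

/-- the Euclidean inner product of the `n`-th and `p`-th derivatives. -/
private def cP (x : ℝ → EuclideanSpace ℝ (Fin 3)) (n p : ℕ) (s : ℝ) : ℝ :=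
  cD x n 0 s * cD x p 0 s + cD x n 1 s * cD x p 1 s + cD x n 2 s * cD x p 2 s

/-- the determinant of the `n`-th, `p`-th, `r`-th derivatives. -/
private def cE (x : ℝ → EuclideanSpace ℝ (Fin 3)) (n p r : ℕ) (s : ℝ) : ℝ :=
  cD x n 0 s * cD x p 1 s * cD x r 2 s - cD x n 0 s * cD x r 1 s * cD x p 2 s
    - cD x p 0 s * cD x n 1 s * cD x r 2 s + cD x p 0 s * cD x r 1 s * cD x n 2 s
    + cD x r 0 s * cD x n 1 s * cD x p 2 s - cD x r 0 s * cD x p 1 s * cD x n 2 s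

private lemma cD_hasDeriv {x : ℝ → EuclideanSpace ℝ (Fin 3)} (hx : ContDiff ℝ (⊤ : ℕ∞) x)
    (n : ℕ) (i : Fin 3) (s : ℝ) : HasDerivAt (cD x n i) (cD x (n + 1) i s) s := by
  have hxc : ContDiff ℝ (⊤ : ℕ∞) (fun s => x s i) :=
    ((EuclideanSpace.proj i : EuclideanSpace ℝ (Fin 3) →L[ℝ] ℝ).contDiff).comp hx
  have hdiff : DifferentiableAt ℝ (cD x n i) s :=
    (hxc.differentiable_iteratedDeriv n (aux_lt_top n)) s
  have h : cD x (n + 1) i s = deriv (cD x n i) s := by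
    rw [cD, iteratedDeriv_succ]; rfl
  rw [h]
  exact hdiff.hasDerivAt

private lemma cP_hasDeriv {x : ℝ → EuclideanSpace ℝ (Fin 3)} (hx : ContDiff ℝ (⊤ : ℕ∞) x)
    (n p : ℕ) (s : ℝ) :
    HasDerivAt (cP x n p) (cP x (n + 1) p s + cP x n (p + 1) s) s := by
  have h := (((cD_hasDeriv hx n 0 s).mul (cD_hasDeriv hx p 0 s)).add
      ((cD_hasDeriv hx n 1 s).mul (cD_hasDeriv hx p 1 s))).add
      ((cD_hasDeriv hx n 2 s).mul (cD_hasDeriv hx p 2 s))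
  have he : cP x (n + 1) p s + cP x n (p + 1) s =
      (cD x (n+1) 0 s * cD x p 0 s + cD x n 0 s * cD x (p+1) 0 s +
        (cD x (n+1) 1 s * cD x p 1 s + cD x n 1 s * cD x (p+1) 1 s)) +
        (cD x (n+1) 2 s * cD x p 2 s + cD x n 2 s * cD x (p+1) 2 s) := by
    unfold cP; ring
  rw [he]
  exact h

private lemma cE_hasDeriv {x : ℝ → EuclideanSpace ℝ (Fin 3)} (hx : ContDiff ℝ (⊤ : ℕ∞) x)
    (n p r : ℕ) (s : ℝ) :
    HasDerivAt (cE x n p r)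
      (cE x (n + 1) p r s + cE x n (p + 1) r s + cE x n p (r + 1) s) s := by
  have D := fun a i => cD_hasDeriv hx a i s
  have h := (((((((D n 0).mul (D p 1)).mul (D r 2)).sub
      (((D n 0).mul (D r 1)).mul (D p 2))).sub
      (((D p 0).mul (D n 1)).mul (D r 2))).add
      (((D p 0).mul (D r 1)).mul (D n 2))).add
      (((D r 0).mul (D n 1)).mul (D p 2))).sub
      (((D r 0).mul (D p 1)).mul (D n 2))
  convert h using 1
  all_goals first | rfl | (unfold cE; simp only [Pi.mul_apply]; ring)

private lemma cE_gram (x : ℝ → EuclideanSpace ℝ (Fin 3)) (n p r : ℕ) (s : ℝ) :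
    cE x n p r s ^ 2 =
      cP x n n s * cP x p p s * cP x r r s
        + 2 * cP x n p s * cP x p r s * cP x n r s
        - cP x n n s * cP x p r s ^ 2 - cP x p p s * cP x n r s ^ 2
        - cP x r r s * cP x n p s ^ 2 := by
  unfold cE cP; ring

private lemma cE_nnr (x : ℝ → EuclideanSpace ℝ (Fin 3)) (n r : ℕ) (s : ℝ) :
    cE x n n r s = 0 := by unfold cE; ring

private lemma cE_npp (x : ℝ → EuclideanSpace ℝ (Fin 3)) (n p : ℕ) (s : ℝ) :
    cE x n p p s = 0 := by unfold cE; ring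

private lemma iter_add_const (n : ℕ) (g : ℝ → ℝ) (c : ℝ) :
    iteratedDeriv (n + 1) (fun t => g t + c) = iteratedDeriv (n + 1) g := by
  rw [iteratedDeriv_succ', iteratedDeriv_succ', deriv_add_const']

/-- For a unit-speed space curve `x` in `ℝ³` with curvature
`κ = ‖x''‖ > 0` and torsion `τ = det(x',x'',x''')/κ²`, the light-cone lift
`m = (1/√2 + x·x/(2√2), −1/√2 + x·x/(2√2), x)` into `ℝ⁵₁` satisfies `⟨m,m⟩ = 0`,
`⟨m',m'⟩ = 1`, `⟨m'',m''⟩ = κ²`, `⟨m''',m'''⟩ = κ⁴ + (κ')² + κ²τ²`, and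
`⟨m⁽⁴⁾,m⁽⁴⁾⟩ = 9κ²(κ')² + (κ³ + κτ² − κ'')² + (2κ'τ + κτ')²`. -/
theorem lightcone_lift_products_euclidean
    (x : ℝ → EuclideanSpace ℝ (Fin 3)) (hx : ContDiff ℝ (⊤ : ℕ∞) x)
    (hunit : ∀ s, ‖deriv x s‖ = 1)
    (κ : ℝ → ℝ) (hκdef : ∀ s, κ s = ‖iteratedDeriv 2 x s‖)
    (hκpos : ∀ s, 0 < κ s)
    (τ : ℝ → ℝ)
    (hτ : ∀ s, τ s =
      (Matrix.of fun i j : Fin 3 =>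
        ![deriv x s, iteratedDeriv 2 x s, iteratedDeriv 3 x s] j i).det / κ s ^ 2)
    (m : ℝ → Fin 5 → ℝ)
    (hm : ∀ s, m s =
      ![1 / Real.sqrt 2 + (∑ i, x s i * x s i) / (2 * Real.sqrt 2),
        -1 / Real.sqrt 2 + (∑ i, x s i * x s i) / (2 * Real.sqrt 2),
        x s 0, x s 1, x s 2]) :
    ∀ s : ℝ,
      mink5 (m s) (m s) = 0 ∧
      mink5 (deriv m s) (deriv m s) = 1 ∧
      mink5 (iteratedDeriv 2 m s) (iteratedDeriv 2 m s) = κ s ^ 2 ∧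
      mink5 (iteratedDeriv 3 m s) (iteratedDeriv 3 m s) =
        κ s ^ 4 + deriv κ s ^ 2 + κ s ^ 2 * τ s ^ 2 ∧
      mink5 (iteratedDeriv 4 m s) (iteratedDeriv 4 m s) =
        9 * κ s ^ 2 * deriv κ s ^ 2 +
          (κ s ^ 3 + κ s * τ s ^ 2 - iteratedDeriv 2 κ s) ^ 2 +
          (2 * deriv κ s * τ s + κ s * deriv τ s) ^ 2 := by
  -- basic notation
  have sqrt2_pos : (0:ℝ) < Real.sqrt 2 := Real.sqrt_pos.2 (by norm_num)
  have sqrt2_sq : Real.sqrt 2 * Real.sqrt 2 = 2 := Real.mul_self_sqrt (by norm_num)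
  have hxc : ∀ i : Fin 3, ContDiff ℝ (⊤ : ℕ∞) (fun s => x s i) := fun i =>
    ((EuclideanSpace.proj i : EuclideanSpace ℝ (Fin 3) →L[ℝ] ℝ).contDiff).comp hx
  -- components of iterated derivatives of x
  have hcomp : ∀ (n : ℕ) (s : ℝ) (i : Fin 3), iteratedDeriv n x s i = cD x n i s :=
    fun n s i => (clm_iter x hx (EuclideanSpace.proj i) n s).symm
  have hc1 : ∀ (s : ℝ) (i : Fin 3), deriv x s i = cD x 1 i s := fun s i => by
    rw [← iteratedDeriv_one]; exact hcomp 1 s i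
  -- symmetry of cP
  have cPsymm : ∀ n p s, cP x n p s = cP x p n s := fun n p s => by unfold cP; ring
  -- ⟨x', x'⟩ = 1
  have h11 : ∀ s, cP x 1 1 s = 1 := by
    intro s
    have h2 : ‖deriv x s‖ ^ 2 = 1 := by rw [hunit s]; norm_num
    rw [normsq3] at h2
    simp only [hc1 s] at h2
    unfold cP
    linear_combination h2
  -- ⟨x', x''⟩ = 0
  have h12 : ∀ s, cP x 1 2 s = 0 := by
    intro s
    have hfun : cP x 1 1 = fun _ => (1:ℝ) := funext h11
    have hd0 : deriv (cP x 1 1) s = 0 := by rw [hfun]; simp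
    have hd := (cP_hasDeriv hx 1 1 s).deriv
    rw [hd0] at hd
    have := cPsymm 2 1 s
    linarith
  -- ⟨x', x'''⟩ = -⟨x'', x''⟩
  have h13 : ∀ s, cP x 1 3 s = -cP x 2 2 s := by
    intro s
    have hfun : cP x 1 2 = fun _ => (0:ℝ) := funext h12
    have hd0 : deriv (cP x 1 2) s = 0 := by rw [hfun]; simp
    have hd := (cP_hasDeriv hx 1 2 s).deriv
    rw [hd0] at hd
    have := cPsymm 2 2 s
    linarith
  -- ⟨x', x''''⟩ = -3⟨x'', x'''⟩
  have h14 : ∀ s, cP x 1 4 s = -3 * cP x 2 3 s := by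
    intro s
    have hfun : cP x 1 3 = fun t => -(cP x 2 2 t) := funext fun t => by rw [h13 t]
    have hB : HasDerivAt (cP x 1 3) (-(cP x 3 2 s + cP x 2 3 s)) s := by
      rw [hfun]; exact (cP_hasDeriv hx 2 2 s).neg
    have hA := cP_hasDeriv hx 1 3 s
    have := hA.unique hB
    have hs := cPsymm 3 2 s
    linarith
  -- κ² = ⟨x'', x''⟩
  have hk2 : ∀ s, κ s ^ 2 = cP x 2 2 s := by
    intro s
    rw [hκdef s, normsq3]
    simp only [hcomp 2 s]
    unfold cP; ring
  have hκne : ∀ s, κ s ≠ 0 := fun s => (hκpos s).ne'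
  have hP22pos : ∀ s, 0 < cP x 2 2 s := fun s => by
    rw [← hk2 s]; exact pow_pos (hκpos s) 2
  -- κ as sqrt of cP 2 2
  have hsqrt : ∀ s, Real.sqrt (cP x 2 2 s) = κ s := fun s => by
    rw [← hk2 s]; exact Real.sqrt_sq (hκpos s).le
  have hκfun : κ = fun s => Real.sqrt (cP x 2 2 s) := funext fun s => (hsqrt s).symm
  -- derivative of cP 2 2
  have h22deriv : ∀ s, HasDerivAt (cP x 2 2) (2 * cP x 2 3 s) s := fun s => by
    have h := cP_hasDeriv hx 2 2 s
    have : cP x 3 2 s + cP x 2 3 s = 2 * cP x 2 3 s := by rw [cPsymm 3 2 s]; ring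
    rwa [this] at h
  -- HasDerivAt κ
  have hκA : ∀ s, HasDerivAt κ (cP x 2 3 s / κ s) s := by
    intro s
    have h := (h22deriv s).sqrt (hP22pos s).ne'
    rw [hsqrt s, ← hκfun] at h
    have he : 2 * cP x 2 3 s / (2 * κ s) = cP x 2 3 s / κ s :=
      mul_div_mul_left _ _ two_ne_zero
    rwa [he] at h
  have hκd : ∀ s, deriv κ s = cP x 2 3 s / κ s := fun s => (hκA s).deriv
  have hp23 : ∀ s, cP x 2 3 s = κ s * deriv κ s := fun s => by
    rw [hκd s, ← mul_div_assoc, mul_div_cancel_left₀ _ (hκne s)]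
  -- second derivative of κ
  have hκ'fun : deriv κ = fun s => cP x 2 3 s / κ s := funext hκd
  have hκ'A : ∀ s, HasDerivAt (deriv κ)
      (((cP x 3 3 s + cP x 2 4 s) * κ s - cP x 2 3 s * (cP x 2 3 s / κ s)) / κ s ^ 2) s := by
    intro s
    rw [hκ'fun]
    exact (cP_hasDeriv hx 2 3 s).div (hκA s) (hκne s)
  have hκ''A : ∀ s, HasDerivAt (deriv κ) (iteratedDeriv 2 κ s) s := by
    intro s
    have h := hκ'A s
    have he : iteratedDeriv 2 κ s =
        ((cP x 3 3 s + cP x 2 4 s) * κ s - cP x 2 3 s * (cP x 2 3 s / κ s)) / κ s ^ 2 := by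
      rw [show (2:ℕ) = 1 + 1 from rfl, iteratedDeriv_succ, iteratedDeriv_one]
      exact h.deriv
    rw [he]
    exact h
  -- ⟨x'', x''''⟩ relation
  have hp24 : ∀ s, cP x 2 4 s = κ s * iteratedDeriv 2 κ s + deriv κ s ^ 2 - cP x 3 3 s := by
    intro s
    have hfun23 : cP x 2 3 = fun t => κ t * deriv κ t := funext hp23
    have hκA' : HasDerivAt κ (deriv κ s) s := by rw [hκd s]; exact hκA s
    have hB : HasDerivAt (cP x 2 3)
        (deriv κ s * deriv κ s + κ s * iteratedDeriv 2 κ s) s := by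
      rw [hfun23]; exact hκA'.mul (hκ''A s)
    have hA := cP_hasDeriv hx 2 3 s
    have := hA.unique hB
    linarith
  -- τ in terms of cE
  have hτP : ∀ s, τ s = cE x 1 2 3 s / κ s ^ 2 := by
    intro s
    rw [hτ s]
    congr 1
    rw [Matrix.det_fin_three]
    simp only [Matrix.of_apply, Matrix.cons_val', Matrix.cons_val_zero, Matrix.cons_val_one,
      Matrix.head_cons, Matrix.empty_val', Matrix.cons_val_fin_one, Matrix.head_fin_const,
      Matrix.cons_val_two, Matrix.tail_cons]
    simp only [hc1 s, hcomp 2 s, hcomp 3 s]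
    unfold cE; ring
  have hE123 : ∀ s, cE x 1 2 3 s = κ s ^ 2 * τ s := fun s => by
    rw [hτP s, ← mul_div_assoc, mul_div_cancel_left₀ _ (pow_ne_zero 2 (hκne s))]
  -- HasDerivAt of cE 1 2 3 with zero terms removed
  have hEA : ∀ s, HasDerivAt (cE x 1 2 3) (cE x 1 2 4 s) s := by
    intro s
    have h := cE_hasDeriv hx 1 2 3 s
    rwa [cE_nnr x 2 3 s, cE_npp x 1 3 s, zero_add, zero_add] at h
  -- τ HasDerivAt
  have hτfun : τ = fun s => cE x 1 2 3 s / cP x 2 2 s := funext fun s => by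
    rw [hτP s, hk2 s]
  have hτA : ∀ s, HasDerivAt τ
      ((cE x 1 2 4 s * cP x 2 2 s - cE x 1 2 3 s * (2 * cP x 2 3 s)) / cP x 2 2 s ^ 2) s := by
    intro s
    rw [hτfun]
    exact (hEA s).div (h22deriv s) (hP22pos s).ne'
  -- cE 1 2 4 in terms of κ, τ and their derivatives
  have hE124 : ∀ s, cE x 1 2 4 s = 2 * κ s * deriv κ s * τ s + κ s ^ 2 * deriv τ s := by
    intro s
    have hd := (hτA s).deriv
    rw [← hk2 s, hE123 s, hp23 s] at hd
    have hκn := hκne s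
    rw [eq_comm, div_eq_iff (pow_ne_zero 2 (pow_ne_zero 2 hκn))] at hd
    have key : cE x 1 2 4 s * κ s ^ 2 =
        (2 * κ s * deriv κ s * τ s + κ s ^ 2 * deriv τ s) * κ s ^ 2 := by
      linear_combination hd
    exact mul_right_cancel₀ (pow_ne_zero 2 hκn) key
  -- ⟨x''', x'''⟩
  have hp33 : ∀ s, cP x 3 3 s = κ s ^ 4 + deriv κ s ^ 2 + κ s ^ 2 * τ s ^ 2 := by
    intro s
    have G := cE_gram x 1 2 3 s
    rw [h11 s, h12 s, h13 s, hp23 s, hE123 s, ← hk2 s] at G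
    have hκn := hκne s
    have key : κ s ^ 2 * cP x 3 3 s =
        κ s ^ 2 * (κ s ^ 4 + deriv κ s ^ 2 + κ s ^ 2 * τ s ^ 2) := by
      linear_combination -G
    exact mul_left_cancel₀ (pow_ne_zero 2 hκn) key
  -- ⟨x'''', x''''⟩
  have hp44 : ∀ s, cP x 4 4 s =
      9 * κ s ^ 2 * deriv κ s ^ 2 +
        (κ s ^ 3 + κ s * τ s ^ 2 - iteratedDeriv 2 κ s) ^ 2 +
        (2 * deriv κ s * τ s + κ s * deriv τ s) ^ 2 := by
    intro s
    have G := cE_gram x 1 2 4 s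
    rw [h11 s, h12 s, h14 s, hp24 s, hp33 s, hp23 s, hE124 s, ← hk2 s] at G
    have hκn := hκne s
    have key : κ s ^ 2 * cP x 4 4 s =
        κ s ^ 2 * (9 * κ s ^ 2 * deriv κ s ^ 2 +
          (κ s ^ 3 + κ s * τ s ^ 2 - iteratedDeriv 2 κ s) ^ 2 +
          (2 * deriv κ s * τ s + κ s * deriv τ s) ^ 2) := by
      linear_combination -G
    exact mul_left_cancel₀ (pow_ne_zero 2 hκn) key
  -- smoothness of m
  have hq : ContDiff ℝ (⊤ : ℕ∞) (fun s => ∑ i : Fin 3, x s i * x s i) :=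
    ContDiff.sum fun i _ => (hxc i).mul (hxc i)
  have hmfun : m = fun s =>
      ![1 / Real.sqrt 2 + (∑ i, x s i * x s i) / (2 * Real.sqrt 2),
        -1 / Real.sqrt 2 + (∑ i, x s i * x s i) / (2 * Real.sqrt 2),
        x s 0, x s 1, x s 2] := funext hm
  have hcm : ContDiff ℝ (⊤ : ℕ∞) m := by
    rw [hmfun]
    apply contDiff_pi.2
    intro j
    fin_cases j <;>
      simp only [Matrix.cons_val_zero, Matrix.cons_val_one, Matrix.head_cons,
        Matrix.cons_val_two, Matrix.tail_cons, Matrix.cons_val_three, Matrix.cons_val_four,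
        Matrix.head_fin_const]
    · exact contDiff_const.add (hq.div_const _)
    · exact contDiff_const.add (hq.div_const _)
    · exact hxc 0
    · exact hxc 1
    · exact hxc 2
  have hmcomp : ∀ (n : ℕ) (s : ℝ) (j : Fin 5),
      iteratedDeriv n m s j = iteratedDeriv n (fun t => m t j) s :=
    fun n s j => (clm_iter m hcm (ContinuousLinearMap.proj j) n s).symm
  -- components 0 and 1 of m differ by a constant
  have hsq2 : Real.sqrt 2 = 1 / Real.sqrt 2 + 1 / Real.sqrt 2 := by
    have h2ne : Real.sqrt 2 ≠ 0 := sqrt2_pos.ne'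
    rw [← add_div, eq_div_iff h2ne]
    linear_combination sqrt2_sq
  have hm01 : (fun t => m t 0) = fun t => m t 1 + Real.sqrt 2 := by
    funext t
    rw [hm t]
    simp only [Matrix.cons_val_zero, Matrix.cons_val_one, Matrix.head_cons]
    have hneg : (-1 : ℝ) / Real.sqrt 2 = -(1 / Real.sqrt 2) := neg_div _ 1
    linarith [hsq2, hneg]
  -- spatial components
  have hm2 : (fun t => m t 2) = fun t => x t 0 := funext fun t => by rw [hm t]; simp
  have hm3 : (fun t => m t 3) = fun t => x t 1 := funext fun t => by rw [hm t]; simp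
  have hm4 : (fun t => m t 4) = fun t => x t 2 := funext fun t => by rw [hm t]; simp
  -- reduction of mink5 to cP
  have hmink : ∀ (n : ℕ) (s : ℝ),
      mink5 (iteratedDeriv (n + 1) m s) (iteratedDeriv (n + 1) m s) = cP x (n+1) (n+1) s := by
    intro n s
    have e := hmcomp (n + 1) s
    unfold mink5
    rw [e 0, e 1, e 2, e 3, e 4]
    have h01 : iteratedDeriv (n + 1) (fun t => m t 0) s =
        iteratedDeriv (n + 1) (fun t => m t 1) s := by
      rw [hm01, iter_add_const]
    rw [h01, hm2, hm3, hm4]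
    unfold cP cD
    ring
  -- finish
  intro s
  refine ⟨?_, ?_, ?_, ?_, ?_⟩
  · -- ⟨m, m⟩ = 0
    have hkey : ∀ q : ℝ,
        -((1/Real.sqrt 2 + q/(2*Real.sqrt 2)) * (1/Real.sqrt 2 + q/(2*Real.sqrt 2)))
          + (-1/Real.sqrt 2 + q/(2*Real.sqrt 2)) * (-1/Real.sqrt 2 + q/(2*Real.sqrt 2))
          = -q := by
      intro q
      have h2ne : Real.sqrt 2 ≠ 0 := sqrt2_pos.ne'
      field_simp
      linear_combination 4 * q * sqrt2_sq
    rw [hm s]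
    unfold mink5
    simp only [Matrix.cons_val_zero, Matrix.cons_val_one, Matrix.head_cons,
      Matrix.cons_val_two, Matrix.tail_cons, Matrix.cons_val_three, Matrix.cons_val_four,
      Matrix.head_fin_const]
    rw [Fin.sum_univ_three]
    linarith [hkey (x s 0 * x s 0 + x s 1 * x s 1 + x s 2 * x s 2)]
  · rw [← iteratedDeriv_one, show (1:ℕ) = 0 + 1 from rfl, hmink 0 s]
    exact h11 s
  · rw [show (2:ℕ) = 1 + 1 from rfl, hmink 1 s, ← hk2 s]
  · rw [show (3:ℕ) = 2 + 1 from rfl, hmink 2 s]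
    exact hp33 s
  · rw [show (4:ℕ) = 3 + 1 from rfl, hmink 3 s]
    exact hp44 s
end
end
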